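/- arXiv:2506.07950 — 15 statements merged into one kernel-verified Lean document; each statement's English description precedes it below -/
import Mathlib

section
/- Let N, M ≥ 1, let R be an invertible N²×N² complex matrix satisfying the Yang–Baxter equation, and let S be an invertible M²×M² complex matrix satisfying the Yang–Baxter equation. Then the lashing (Tracy–Singh) product R ⊠ S, an (NM)²×(NM)² matrix, is invertible and satisfies the Yang–Baxter equation. -/
open Matrix Kronecker

/-- `R ⊗ₖ 1`, viewed as a matrix indexed by `ι × ι × ι` via the canonical
associativity reindexing. -/
def ybL {ι : Type*} [DecidableEq ι] (R : Matrix (ι × ι) (ι × ι) ℂ) :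
    Matrix (ι × ι × ι) (ι × ι × ι) ℂ :=
  Matrix.reindex (Equiv.prodAssoc ι ι ι) (Equiv.prodAssoc ι ι ι)
    (R ⊗ₖ (1 : Matrix ι ι ℂ))

/-- `1 ⊗ₖ R`, indexed by `ι × ι × ι`. -/
def ybR {ι : Type*} [DecidableEq ι] (R : Matrix (ι × ι) (ι × ι) ℂ) :
    Matrix (ι × ι × ι) (ι × ι × ι) ℂ :=
  (1 : Matrix ι ι ℂ) ⊗ₖ R

/-- The (constant) Yang–Baxter equation. -/
def SatisfiesYBE {ι : Type*} [Fintype ι] [DecidableEq ι]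
    (R : Matrix (ι × ι) (ι × ι) ℂ) : Prop :=
  ybL R * ybR R * ybL R = ybR R * ybL R * ybR R

/-- The lashing (Tracy–Singh) product `R ⊠ S`: the Kronecker product `R ⊗ₖ S`
conjugated by the middle swap `1 ⊗ₖ P ⊗ₖ 1`, i.e. reindexed along the canonical
equivalence `(N × N) × (M × M) ≃ (N × M) × (N × M)`. -/
def lashing {N M : ℕ} (R : Matrix (Fin N × Fin N) (Fin N × Fin N) ℂ)
    (S : Matrix (Fin M × Fin M) (Fin M × Fin M) ℂ) :
    Matrix ((Fin N × Fin M) × (Fin N × Fin M)) ((Fin N × Fin M) × (Fin N × Fin M)) ℂ :=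
  Matrix.reindex (Equiv.prodProdProdComm (Fin N) (Fin N) (Fin M) (Fin M))
    (Equiv.prodProdProdComm (Fin N) (Fin N) (Fin M) (Fin M)) (R ⊗ₖ S)

/-- The shuffle equivalence. -/
def shuf (N M : ℕ) :
    ((Fin N × Fin N × Fin N) × (Fin M × Fin M × Fin M)) ≃
      ((Fin N × Fin M) × (Fin N × Fin M) × (Fin N × Fin M)) where
  toFun := fun p => ((p.1.1, p.2.1), (p.1.2.1, p.2.2.1), (p.1.2.2, p.2.2.2))
  invFun := fun p => ((p.1.1, p.2.1.1, p.2.2.1), (p.1.2, p.2.1.2, p.2.2.2))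
  left_inv := by rintro ⟨⟨a, c, e⟩, ⟨b, d, f⟩⟩; rfl
  right_inv := by rintro ⟨⟨a, b⟩, ⟨c, d⟩, ⟨e, f⟩⟩; rfl

lemma ybL_lashing {N M : ℕ} (R : Matrix (Fin N × Fin N) (Fin N × Fin N) ℂ)
    (S : Matrix (Fin M × Fin M) (Fin M × Fin M) ℂ) :
    ybL (lashing R S) = Matrix.reindex (shuf N M) (shuf N M) (ybL R ⊗ₖ ybL S) := by
  ext ⟨⟨a, b⟩, ⟨c, d⟩, ⟨e, f⟩⟩ ⟨⟨a', b'⟩, ⟨c', d'⟩, ⟨e', f'⟩⟩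
  simp [ybL, lashing, shuf, Matrix.one_apply, Prod.ext_iff]
  split_ifs <;> simp_all

lemma ybR_lashing {N M : ℕ} (R : Matrix (Fin N × Fin N) (Fin N × Fin N) ℂ)
    (S : Matrix (Fin M × Fin M) (Fin M × Fin M) ℂ) :
    ybR (lashing R S) = Matrix.reindex (shuf N M) (shuf N M) (ybR R ⊗ₖ ybR S) := by
  ext ⟨⟨a, b⟩, ⟨c, d⟩, ⟨e, f⟩⟩ ⟨⟨a', b'⟩, ⟨c', d'⟩, ⟨e', f'⟩⟩
  simp [ybR, lashing, shuf, Matrix.one_apply, Prod.ext_iff]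
  split_ifs <;> simp_all

/-- if `R` and `S` are invertible solutions of the Yang–Baxter equation,
then so is their lashing (Tracy–Singh) product `R ⊠ S`. -/
theorem lashing_isUnit_and_satisfiesYBE (N M : ℕ) (hN : 1 ≤ N) (hM : 1 ≤ M)
    (R : Matrix (Fin N × Fin N) (Fin N × Fin N) ℂ)
    (S : Matrix (Fin M × Fin M) (Fin M × Fin M) ℂ)
    (hRu : IsUnit R) (hSu : IsUnit S)
    (hRY : SatisfiesYBE R) (hSY : SatisfiesYBE S) :
    IsUnit (lashing R S) ∧ SatisfiesYBE (lashing R S) := by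
  constructor
  · rw [Matrix.isUnit_iff_isUnit_det] at hRu hSu ⊢
    rw [lashing, Matrix.det_reindex_self, Matrix.det_kronecker]
    exact (hRu.pow _).mul (hSu.pow _)
  · unfold SatisfiesYBE
    rw [ybL_lashing, ybR_lashing]
    have h : ∀ A B : Matrix ((Fin N × Fin N × Fin N) × (Fin M × Fin M × Fin M))
        ((Fin N × Fin N × Fin N) × (Fin M × Fin M × Fin M)) ℂ,
        Matrix.reindex (shuf N M) (shuf N M) A * Matrix.reindex (shuf N M) (shuf N M) B =
        Matrix.reindex (shuf N M) (shuf N M) (A * B) := by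
      intro A B
      simp [Matrix.reindex_apply, Matrix.submatrix_mul_equiv]
    rw [h, h, h, h, ← Matrix.mul_kronecker_mul, ← Matrix.mul_kronecker_mul,
      ← Matrix.mul_kronecker_mul, ← Matrix.mul_kronecker_mul, hRY, hSY]
end

section
/- Let N, M ≥ 1, let R be an N²×N² complex matrix and S an M²×M² complex matrix, and let c denote the permutation matrix of the swap equivalence Fin N × Fin M ≃ Fin M × Fin N. Then (c ⊗ₖ c)(R ⊠ S) = (S ⊠ R)(c ⊗ₖ c), after reindexing both sides along the canonical equivalences of product index types. (This is the braiding of YB(Mat) coming from the symmetric braiding of Mat.) -/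
open Matrix Kronecker

/-- The permutation matrix of the swap equivalence `Fin N × Fin M ≃ Fin M × Fin N`,
sending the basis vector `e_(i,j)` to `e_(j,i)`. -/
def swapMat (N M : ℕ) : Matrix (Fin M × Fin N) (Fin N × Fin M) ℂ :=
  Matrix.of fun p q => if p = Prod.swap q then 1 else 0

/-- `(c ⊗ₖ c) (R ⊠ S) = (S ⊠ R) (c ⊗ₖ c)` where `c` is the swap
`Fin N × Fin M ≃ Fin M × Fin N`: the braiding of `YB(Mat)`. -/
theorem swap_kron_lashing_comm (N M : ℕ) (hN : 1 ≤ N) (hM : 1 ≤ M)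
    (R : Matrix (Fin N × Fin N) (Fin N × Fin N) ℂ)
    (S : Matrix (Fin M × Fin M) (Fin M × Fin M) ℂ) :
    (swapMat N M ⊗ₖ swapMat N M) * lashing R S
      = lashing S R * (swapMat N M ⊗ₖ swapMat N M) := by
  ext ⟨⟨p11, p12⟩, p21, p22⟩ ⟨⟨q11, q12⟩, q21, q22⟩
  simp only [Matrix.mul_apply, lashing, swapMat, Matrix.kroneckerMap_apply,
    Matrix.reindex_apply, Matrix.submatrix_apply, Equiv.prodProdProdComm_symm,
    Equiv.prodProdProdComm_apply, Matrix.of_apply, Prod.swap_prod_mk, Prod.mk.injEq,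
    ite_mul, mul_ite, one_mul, mul_one, zero_mul, mul_zero, Fintype.sum_prod_type]
  simp [ite_and, Finset.sum_ite_eq, Finset.sum_ite_eq', mul_comm]
end

section
/- Let R be an invertible N²×N² complex matrix satisfying the Yang–Baxter equation, S an invertible M²×M² complex matrix satisfying the Yang–Baxter equation, and μ ≠ 0 a complex number. Define the square matrix T indexed by pairs from Fin N ⊕ Fin M by: T(eᵢ ⊗ eⱼ) = R(eᵢ ⊗ eⱼ) when both indices come from Fin N; T(eᵢ ⊗ eⱼ) = S applied to the corresponding pair when both indices come from Fin M; and T(eᵢ ⊗ eⱼ) = μ · (eⱼ ⊗ eᵢ) when the indices come from different summands. Then T is invertible and satisfies the Yang–Baxter equation. -/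
open Matrix Kronecker

/-- The direct sum `R ⊞_μ S`: on basis vectors `e_p ⊗ e_q` of
`ℂ^(N+M) ⊗ ℂ^(N+M)` (indices in `Fin N ⊕ Fin M`), it acts as `R` when both
indices are in `Fin N`, as `S` when both are in `Fin M`, and sends
`e_p ⊗ e_q ↦ μ • (e_q ⊗ e_p)` for mixed indices. -/
def dsum {N M : ℕ} (R : Matrix (Fin N × Fin N) (Fin N × Fin N) ℂ)
    (S : Matrix (Fin M × Fin M) (Fin M × Fin M) ℂ) (μ : ℂ) :
    Matrix ((Fin N ⊕ Fin M) × (Fin N ⊕ Fin M)) ((Fin N ⊕ Fin M) × (Fin N ⊕ Fin M)) ℂ :=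
  Matrix.of fun p q =>
    match p, q with
    | (Sum.inl a, Sum.inl b), (Sum.inl i, Sum.inl j) => R (a, b) (i, j)
    | (Sum.inr a, Sum.inr b), (Sum.inr i, Sum.inr j) => S (a, b) (i, j)
    | (Sum.inr b, Sum.inl a), (Sum.inl i, Sum.inr j) => if a = i ∧ b = j then μ else 0
    | (Sum.inl b, Sum.inr a), (Sum.inr i, Sum.inl j) => if a = i ∧ b = j then μ else 0
    | _, _ => 0

/-!
`R ⊞_μ S` preserves the splitting of `(ℂᴺ ⊕ ℂᴹ)^⊗2` into the `NN`, `MM` and mixed blocks and acts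
on them by `R`, `S` and `μ` times the flip, so `A ⊞_ν B` with `RA = 1`, `SB = 1`, `μν = 1` is a
right inverse.

On `(ℂᴺ ⊕ ℂᴹ)^⊗3`, both `T₁` and `T₂` map a basis vector into the span of basis vectors with the
same number of `N`-factors. On the pure sectors the Yang–Baxter equation for `T` is that of `R` or
of `S`. On a mixed sector each side of it applies `R` (or `S`) once to the two factors of the same
kind and swaps the odd factor past them twice, picking up `μ²`, so the two sides agree coordinate
by coordinate.
-/

section YangBaxter

variable {ι : Type*} [Fintype ι] [DecidableEq ι]

lemma ybL_mul_ybR_mul_ybL_apply (A B C : Matrix (ι × ι) (ι × ι) ℂ) (p q : ι × ι × ι) :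
    (ybL A * ybR B * ybL C) p q = ∑ a, ∑ b, ∑ c,
      A (p.1, p.2.1) (a, b) * (B (b, p.2.2) (c, q.2.2) * C (a, c) (q.1, q.2.1)) := by
  obtain ⟨p₁, p₂, p₃⟩ := p
  obtain ⟨q₁, q₂, q₃⟩ := q
  simp only [ybL, reindex_apply, ybR, mul_apply, submatrix_apply, Equiv.prodAssoc_symm_apply,
    kroneckerMap_apply, one_apply, mul_ite, mul_one, mul_zero, ite_mul, one_mul, zero_mul,
    Fintype.sum_prod_type, Finset.sum_ite_irrel, Finset.sum_ite_eq, Finset.sum_ite_eq',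
    Finset.mem_univ, ↓reduceIte, Finset.sum_const_zero, Finset.sum_mul, mul_assoc]
  exact Finset.sum_congr rfl fun _ _ => Finset.sum_comm

lemma ybR_mul_ybL_mul_ybR_apply (A B C : Matrix (ι × ι) (ι × ι) ℂ) (p q : ι × ι × ι) :
    (ybR A * ybL B * ybR C) p q = ∑ a, ∑ b, ∑ c,
      A (p.2.1, p.2.2) (a, b) * (B (p.1, a) (q.1, c) * C (c, b) (q.2.1, q.2.2)) := by
  obtain ⟨p₁, p₂, p₃⟩ := p
  obtain ⟨q₁, q₂, q₃⟩ := q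
  simp only [ybL, reindex_apply, ybR, mul_apply, submatrix_apply, Equiv.prodAssoc_symm_apply,
    kroneckerMap_apply, one_apply, mul_ite, mul_one, mul_zero, ite_mul, one_mul, zero_mul,
    Fintype.sum_prod_type, Finset.sum_ite_irrel, Finset.sum_ite_eq, Finset.sum_ite_eq',
    Finset.mem_univ, ↓reduceIte, Finset.sum_const_zero, Finset.sum_mul, mul_assoc]
  rw [Finset.sum_comm_cycle]
  exact Finset.sum_congr rfl fun _ _ => Finset.sum_comm

lemma satisfiesYBE_iff (R : Matrix (ι × ι) (ι × ι) ℂ) :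
    SatisfiesYBE R ↔ ∀ p₁ p₂ p₃ q₁ q₂ q₃ : ι,
      ∑ a, ∑ b, ∑ c, R (p₁, p₂) (a, b) * (R (b, p₃) (c, q₃) * R (a, c) (q₁, q₂)) =
        ∑ a, ∑ b, ∑ c, R (p₂, p₃) (a, b) * (R (p₁, a) (q₁, c) * R (c, b) (q₂, q₃)) := by
  simp only [SatisfiesYBE, ← Matrix.ext_iff, Prod.forall, ybL_mul_ybR_mul_ybL_apply,
    ybR_mul_ybL_mul_ybR_apply]

end YangBaxter

section DirectSum

variable {N M : ℕ} (R : Matrix (Fin N × Fin N) (Fin N × Fin N) ℂ)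
  (S : Matrix (Fin M × Fin M) (Fin M × Fin M) ℂ) (μ : ℂ)

lemma dsum_mul_dsum_eq_one {A : Matrix (Fin N × Fin N) (Fin N × Fin N) ℂ}
    {B : Matrix (Fin M × Fin M) (Fin M × Fin M) ℂ} {ν : ℂ}
    (hRA : R * A = 1) (hSB : S * B = 1) (hμν : μ * ν = 1) :
    dsum R S μ * dsum A B ν = 1 := by
  have hRA' := fun a b i j => congrFun (congrFun hRA (a, b)) (i, j)
  have hSB' := fun a b i j => congrFun (congrFun hSB (a, b)) (i, j)
  simp only [mul_apply, Fintype.sum_prod_type, one_apply, Prod.mk.injEq] at hRA' hSB'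
  ext ⟨p₁ | p₁, p₂ | p₂⟩ ⟨q₁ | q₁, q₂ | q₂⟩ <;>
    simp only [dsum, of_apply, mul_apply, Fintype.sum_prod_type, Fintype.sum_sum_type] <;>
    simp [one_apply, hRA', hSB', hμν, ite_and]
  all_goals split_ifs <;> rfl

lemma isUnit_dsum (hR : IsUnit R) (hS : IsUnit S) (hμ : IsUnit μ) : IsUnit (dsum R S μ) := by
  obtain ⟨A, hRA⟩ := hR.exists_right_inv
  obtain ⟨B, hSB⟩ := hS.exists_right_inv
  obtain ⟨ν, hμν⟩ := hμ.exists_right_inv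
  exact IsUnit.of_mul_eq_one _ (dsum_mul_dsum_eq_one R S μ hRA hSB hμν)

lemma satisfiesYBE_dsum (hR : SatisfiesYBE R) (hS : SatisfiesYBE S) :
    SatisfiesYBE (dsum R S μ) := by
  rw [satisfiesYBE_iff] at hR hS ⊢
  rintro (p₁ | p₁) (p₂ | p₂) (p₃ | p₃) (q₁ | q₁) (q₂ | q₂) (q₃ | q₃) <;>
    simp only [Fintype.sum_sum_type] <;>
    dsimp only [dsum, of_apply] <;>
    simp only [zero_mul, mul_zero, Finset.sum_const_zero, add_zero, zero_add]
  all_goals simp only [mul_ite, ite_mul, mul_zero, zero_mul, ite_and, Finset.sum_ite_irrel,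
    Finset.sum_ite_eq, Finset.sum_ite_eq', Finset.mem_univ, if_true, Finset.sum_const_zero, hR, hS]
  all_goals split_ifs <;> ring

end DirectSum

/-- the direct sum `R ⊞_μ S` of invertible Yang–Baxter solutions
(with `μ ≠ 0`) is again an invertible Yang–Baxter solution. -/
theorem dsum_isUnit_and_satisfiesYBE (N M : ℕ)
    (R : Matrix (Fin N × Fin N) (Fin N × Fin N) ℂ)
    (S : Matrix (Fin M × Fin M) (Fin M × Fin M) ℂ) (μ : ℂ) (hμ : μ ≠ 0)
    (hRu : IsUnit R) (hSu : IsUnit S)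
    (hRY : SatisfiesYBE R) (hSY : SatisfiesYBE S) :
    IsUnit (dsum R S μ) ∧ SatisfiesYBE (dsum R S μ) :=
  ⟨isUnit_dsum R S μ hRu hSu hμ.isUnit, satisfiesYBE_dsum R S μ hRY hSY⟩
end

section
/- (Doikou–Smoktunowicz equivalence) Let R' be an N²×N² complex matrix satisfying the Yang–Baxter equation and let Q be an invertible N×N complex matrix such that (Q ⊗ₖ Q) * R' = R' * (Q ⊗ₖ Q). Then the matrix R := (Q ⊗ₖ 1ₙ) * R' * (Q⁻¹ ⊗ₖ 1ₙ) also satisfies the Yang–Baxter equation. -/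
open Matrix Kronecker

section Aux

private lemma mv {α : Type*} [Semigroup α] {x y : α} (h : x * y = y * x) (z : α) :
    x * (y * z) = y * (x * z) := by rw [← mul_assoc, h, mul_assoc]

private lemma cn {α : Type*} [Monoid α] {x y : α} (h : x * y = 1) (z : α) :
    x * (y * z) = z := by rw [← mul_assoc, h, one_mul]

private lemma aux_monoid {M : Type*} [Monoid M] (a a' c c' L K : M)
    (ha'a : a' * a = 1) (hcc' : c * c' = 1)
    (hac' : a * c' = c' * a) (ha'c : a' * c = c * a') (ha'c' : a' * c' = c' * a')
    (haK : a * K = K * a) (ha'K : a' * K = K * a')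
    (hcL : c * L = L * c) (hc'L : c' * L = L * c')
    (hYB : L * K * L = K * L * K) :
    (a * L * a') * (c' * K * c) * (a * L * a')
      = (c' * K * c) * (a * L * a') * (c' * K * c) := by
  have hyb3 : ∀ z : M, L * (K * (L * z)) = K * (L * (K * z)) := fun z => by
    rw [← mul_assoc, ← mul_assoc, hYB, mul_assoc, mul_assoc]
  simp only [mul_assoc]
  conv_lhs => rw [mv ha'c', mv ha'K, mv ha'c, cn ha'a, mv hcL, mv hc'L.symm, hyb3]
  conv_rhs => rw [mv ha'c', mv ha'K, ha'c, mv hc'L.symm, mv hac', cn hcc',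
    mv haK.symm, mv hac'.symm]

variable {ι : Type*} [Fintype ι] [DecidableEq ι]

private lemma reindex_mul'' {α β : Type*} [Fintype α] [Fintype β]
    (e : α ≃ β) (M N : Matrix α α ℂ) :
    Matrix.reindex e e M * Matrix.reindex e e N = Matrix.reindex e e (M * N) := by
  simp [Matrix.reindex_apply]

private lemma ybL_mul (X Y : Matrix (ι × ι) (ι × ι) ℂ) :
    ybL (X * Y) = ybL X * ybL Y := by
  unfold ybL
  rw [reindex_mul'']
  congr 1
  simp [← Matrix.mul_kronecker_mul]

private lemma ybR_mul (X Y : Matrix (ι × ι) (ι × ι) ℂ) :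
    ybR (X * Y) = ybR X * ybR Y := by
  unfold ybR
  simp [← Matrix.mul_kronecker_mul]

private lemma ybL_kron_one (P : Matrix ι ι ℂ) :
    ybL (P ⊗ₖ (1 : Matrix ι ι ℂ)) = P ⊗ₖ (1 : Matrix (ι × ι) (ι × ι) ℂ) := by
  unfold ybL
  rw [Matrix.kronecker_assoc, Matrix.one_kronecker_one]

private lemma ybL_comm_third (R : Matrix (ι × ι) (ι × ι) ℂ) (P : Matrix ι ι ℂ) :
    ((1 : Matrix ι ι ℂ) ⊗ₖ ((1 : Matrix ι ι ℂ) ⊗ₖ P)) * ybL R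
      = ybL R * ((1 : Matrix ι ι ℂ) ⊗ₖ ((1 : Matrix ι ι ℂ) ⊗ₖ P)) := by
  have h : Matrix.reindex (Equiv.prodAssoc ι ι ι) (Equiv.prodAssoc ι ι ι)
      (((1 : Matrix ι ι ℂ) ⊗ₖ (1 : Matrix ι ι ℂ)) ⊗ₖ P)
      = (1 : Matrix ι ι ℂ) ⊗ₖ ((1 : Matrix ι ι ℂ) ⊗ₖ P) :=
    Matrix.kronecker_assoc _ _ _
  rw [← h, Matrix.one_kronecker_one]
  unfold ybL
  rw [reindex_mul'', reindex_mul'']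
  congr 1
  simp [← Matrix.mul_kronecker_mul]

end Aux

/-- Doikou–Smoktunowicz equivalence: if `R'` satisfies the YBE and
`Q` is invertible with `Q ⊗ₖ Q` commuting with `R'`, then
`(Q ⊗ₖ 1) R' (Q⁻¹ ⊗ₖ 1)` also satisfies the YBE. -/
theorem ds_equivalent_satisfiesYBE (N : ℕ)
    (R' : Matrix (Fin N × Fin N) (Fin N × Fin N) ℂ) (hR' : SatisfiesYBE R')
    (Q : Matrix (Fin N) (Fin N) ℂ) (hQ : IsUnit Q)
    (hcomm : (Q ⊗ₖ Q) * R' = R' * (Q ⊗ₖ Q)) :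
    SatisfiesYBE ((Q ⊗ₖ (1 : Matrix (Fin N) (Fin N) ℂ)) * R' *
      (Q⁻¹ ⊗ₖ (1 : Matrix (Fin N) (Fin N) ℂ))) := by
  have hdet : IsUnit Q.det := (Matrix.isUnit_iff_isUnit_det Q).mp hQ
  have hinv : Q * Q⁻¹ = 1 := Matrix.mul_nonsing_inv Q hdet
  have hinv' : Q⁻¹ * Q = 1 := Matrix.nonsing_inv_mul Q hdet
  -- key identity derived from the commutation hypothesis
  have h1 : ((1 : Matrix (Fin N) (Fin N) ℂ) ⊗ₖ Q⁻¹) * (Q ⊗ₖ Q) = Q ⊗ₖ (1 : Matrix (Fin N) (Fin N) ℂ) := by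
    rw [← Matrix.mul_kronecker_mul, Matrix.one_mul, hinv']
  have h2 : (Q ⊗ₖ Q) * (Q⁻¹ ⊗ₖ (1 : Matrix (Fin N) (Fin N) ℂ)) = (1 : Matrix (Fin N) (Fin N) ℂ) ⊗ₖ Q := by
    rw [← Matrix.mul_kronecker_mul, Matrix.mul_one, hinv]
  have key : (Q ⊗ₖ (1 : Matrix (Fin N) (Fin N) ℂ)) * R' * (Q⁻¹ ⊗ₖ (1 : Matrix (Fin N) (Fin N) ℂ))
      = ((1 : Matrix (Fin N) (Fin N) ℂ) ⊗ₖ Q⁻¹) * R' * ((1 : Matrix (Fin N) (Fin N) ℂ) ⊗ₖ Q) := by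
    rw [← h1, mul_assoc _ (Q ⊗ₖ Q) R', hcomm, ← mul_assoc, mul_assoc, h2]
  -- unfold the two Yang–Baxter factors of the conjugated matrix
  have hL : ybL ((Q ⊗ₖ (1 : Matrix (Fin N) (Fin N) ℂ)) * R' * (Q⁻¹ ⊗ₖ (1 : Matrix (Fin N) (Fin N) ℂ)))
      = (Q ⊗ₖ (1 : Matrix (Fin N × Fin N) (Fin N × Fin N) ℂ)) * ybL R'
        * (Q⁻¹ ⊗ₖ (1 : Matrix (Fin N × Fin N) (Fin N × Fin N) ℂ)) := by
    rw [ybL_mul, ybL_mul, ybL_kron_one, ybL_kron_one]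
  have hK : ybR ((Q ⊗ₖ (1 : Matrix (Fin N) (Fin N) ℂ)) * R' * (Q⁻¹ ⊗ₖ (1 : Matrix (Fin N) (Fin N) ℂ)))
      = ((1 : Matrix (Fin N) (Fin N) ℂ) ⊗ₖ (Q ⊗ₖ (1 : Matrix (Fin N) (Fin N) ℂ)))
        * ((1 : Matrix (Fin N) (Fin N) ℂ) ⊗ₖ R')
        * ((1 : Matrix (Fin N) (Fin N) ℂ) ⊗ₖ (Q⁻¹ ⊗ₖ (1 : Matrix (Fin N) (Fin N) ℂ))) := by
    rw [ybR_mul, ybR_mul]; rfl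
  -- middle factor rewritten via the key identity
  have hbKc : ((1 : Matrix (Fin N) (Fin N) ℂ) ⊗ₖ (Q ⊗ₖ (1 : Matrix (Fin N) (Fin N) ℂ)))
      * ((1 : Matrix (Fin N) (Fin N) ℂ) ⊗ₖ R')
      * ((1 : Matrix (Fin N) (Fin N) ℂ) ⊗ₖ (Q⁻¹ ⊗ₖ (1 : Matrix (Fin N) (Fin N) ℂ)))
      = ((1 : Matrix (Fin N) (Fin N) ℂ) ⊗ₖ ((1 : Matrix (Fin N) (Fin N) ℂ) ⊗ₖ Q⁻¹))
        * ((1 : Matrix (Fin N) (Fin N) ℂ) ⊗ₖ R')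
        * ((1 : Matrix (Fin N) (Fin N) ℂ) ⊗ₖ ((1 : Matrix (Fin N) (Fin N) ℂ) ⊗ₖ Q)) := by
    have h3 : (1 : Matrix (Fin N) (Fin N) ℂ)
        ⊗ₖ ((Q ⊗ₖ (1 : Matrix (Fin N) (Fin N) ℂ)) * R' * (Q⁻¹ ⊗ₖ (1 : Matrix (Fin N) (Fin N) ℂ)))
        = ((1 : Matrix (Fin N) (Fin N) ℂ) ⊗ₖ (Q ⊗ₖ (1 : Matrix (Fin N) (Fin N) ℂ)))
          * ((1 : Matrix (Fin N) (Fin N) ℂ) ⊗ₖ R')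
          * ((1 : Matrix (Fin N) (Fin N) ℂ) ⊗ₖ (Q⁻¹ ⊗ₖ (1 : Matrix (Fin N) (Fin N) ℂ))) := by
      simp [← Matrix.mul_kronecker_mul]
    have h4 : (1 : Matrix (Fin N) (Fin N) ℂ)
        ⊗ₖ (((1 : Matrix (Fin N) (Fin N) ℂ) ⊗ₖ Q⁻¹) * R' * ((1 : Matrix (Fin N) (Fin N) ℂ) ⊗ₖ Q))
        = ((1 : Matrix (Fin N) (Fin N) ℂ) ⊗ₖ ((1 : Matrix (Fin N) (Fin N) ℂ) ⊗ₖ Q⁻¹))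
          * ((1 : Matrix (Fin N) (Fin N) ℂ) ⊗ₖ R')
          * ((1 : Matrix (Fin N) (Fin N) ℂ) ⊗ₖ ((1 : Matrix (Fin N) (Fin N) ℂ) ⊗ₖ Q)) := by
      simp [← Matrix.mul_kronecker_mul]
    rw [← h3, ← h4, key]
  show _ = _
  rw [hL, hK, hbKc]
  apply aux_monoid
  · simp [← Matrix.mul_kronecker_mul, hinv']
  · simp [← Matrix.mul_kronecker_mul, hinv]
  · simp [← Matrix.mul_kronecker_mul]
  · simp [← Matrix.mul_kronecker_mul]
  · simp [← Matrix.mul_kronecker_mul]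
  · simp [← Matrix.mul_kronecker_mul]
  · simp [← Matrix.mul_kronecker_mul]
  · exact ybL_comm_third R' Q
  · exact ybL_comm_third R' Q⁻¹
  · exact hR'
end

section
/- Let R be an invertible N²×N² complex matrix satisfying the Yang–Baxter equation and Q an invertible N×N complex matrix such that (Q ⊗ₖ Q) * R = R * (Q ⊗ₖ Q). Define S := (1ₙ ⊗ₖ Q) * R * (1ₙ ⊗ₖ Q⁻¹). For each n ≥ 2 let Aₙ be the n-fold Kronecker product Q⁰ ⊗ₖ Q¹ ⊗ₖ ⋯ ⊗ₖ Q^{n−1}, a square matrix indexed by functions Fin n → Fin N (with entries Aₙ v w = ∏ₖ (Q^k)_{v k, w k}). Then for every i with 1 ≤ i ≤ n−1, Aₙ * ρₙᴿ(σᵢ) * Aₙ⁻¹ = ρₙˢ(σᵢ), where ρₙᴿ(σᵢ) = 1ₙ^{⊗(i−1)} ⊗ₖ R ⊗ₖ 1ₙ^{⊗(n−i−1)} and ρₙˢ(σᵢ) is defined analogously with S. Hence R and S yield equivalent representations of the braid group Bₙ for every n (they are ∞-equivalent). -/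
open Matrix Kronecker

/-- The image `ρₙᴿ(σᵢ) = 1^{⊗ i} ⊗ₖ R ⊗ₖ 1^{⊗ (n-i-2)}` of the Artin braid
generator acting at (0-based) positions `i, i+1` of `(ℂ^N)^{⊗ n}`, with the
tensor power indexed by functions `Fin n → Fin N`. -/
def braidGen {N : ℕ} (R : Matrix (Fin N × Fin N) (Fin N × Fin N) ℂ)
    (n : ℕ) (i : Fin n) (h : (i : ℕ) + 1 < n) :
    Matrix (Fin n → Fin N) (Fin n → Fin N) ℂ :=
  Matrix.of fun v w =>
    R (v i, v ⟨(i : ℕ) + 1, h⟩) (w i, w ⟨(i : ℕ) + 1, h⟩) *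
      ∏ k ∈ Finset.univ.filter
          (fun k : Fin n => (k : ℕ) ≠ (i : ℕ) ∧ (k : ℕ) ≠ (i : ℕ) + 1),
        (if v k = w k then (1 : ℂ) else 0)

/-- `Aₙ = Q⁰ ⊗ₖ Q¹ ⊗ₖ ⋯ ⊗ₖ Q^{n-1}`, with entries
`Aₙ v w = ∏ₖ (Q^k)_{v k, w k}`. -/
def An {N : ℕ} (Q : Matrix (Fin N) (Fin N) ℂ) (n : ℕ) :
    Matrix (Fin n → Fin N) (Fin n → Fin N) ℂ :=
  Matrix.of fun v w => ∏ k : Fin n, (Q ^ (k : ℕ)) (v k) (w k)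

namespace YBEAux

variable {N n : ℕ}

/-- "Pi-Kronecker" product of a family of matrices. -/
def piKron (F : Fin n → Matrix (Fin N) (Fin N) ℂ) :
    Matrix (Fin n → Fin N) (Fin n → Fin N) ℂ :=
  Matrix.of fun v w => ∏ k, F k (v k) (w k)

lemma piKron_mul (F G : Fin n → Matrix (Fin N) (Fin N) ℂ) :
    piKron F * piKron G = piKron (fun k => F k * G k) := by
  ext v w
  simp only [piKron, Matrix.mul_apply, Matrix.of_apply]
  have := Finset.prod_univ_sum (fun _ : Fin n => (Finset.univ : Finset (Fin N)))
    (fun k j => F k (v k) j * G k j (w k))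
  rw [Fintype.piFinset_univ] at this
  rw [this]
  exact Finset.sum_congr rfl fun u _ => (Finset.prod_mul_distrib).symm

lemma piKron_one :
    piKron (fun _ : Fin n => (1 : Matrix (Fin N) (Fin N) ℂ)) = 1 := by
  ext v w
  simp only [piKron, Matrix.of_apply]
  by_cases hvw : v = w
  · subst hvw; simp [Matrix.one_apply]
  · obtain ⟨k, hk⟩ := Function.ne_iff.mp hvw
    rw [Matrix.one_apply_ne hvw]
    exact Finset.prod_eq_zero (Finset.mem_univ k) (Matrix.one_apply_ne hk)

section braid

variable (i : Fin n) (h : (i : ℕ) + 1 < n)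

/-- product split off positions i, i+1 -/
lemma prod_split (g : Fin n → ℂ) :
    ∏ k, g k = (∏ k ∈ Finset.univ.filter
        (fun k : Fin n => (k : ℕ) ≠ (i : ℕ) ∧ (k : ℕ) ≠ (i : ℕ) + 1), g k) *
      (g i * g ⟨(i : ℕ) + 1, h⟩) := by
  have hne : i ≠ (⟨(i : ℕ) + 1, h⟩ : Fin n) := by
    simp [Fin.ext_iff]
  have hset : Finset.univ.filter
      (fun k : Fin n => ¬((k : ℕ) ≠ (i : ℕ) ∧ (k : ℕ) ≠ (i : ℕ) + 1)) =
      {i, ⟨(i : ℕ) + 1, h⟩} := by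
    ext k
    simp [Fin.ext_iff]
    omega
  rw [← Finset.prod_filter_mul_prod_filter_not Finset.univ
    (fun k : Fin n => (k : ℕ) ≠ (i : ℕ) ∧ (k : ℕ) ≠ (i : ℕ) + 1) g, hset,
    Finset.prod_pair hne]

/-- update at positions i, i+1 -/
def upd (w : Fin n → Fin N) (p : Fin N × Fin N) : Fin n → Fin N :=
  Function.update (Function.update w i p.1) ⟨(i : ℕ) + 1, h⟩ p.2

lemma upd_apply_i (w : Fin n → Fin N) (p : Fin N × Fin N) :
    upd i h w p i = p.1 := by
  have hne : i ≠ (⟨(i : ℕ) + 1, h⟩ : Fin n) := by simp [Fin.ext_iff]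
  simp [upd, Function.update_of_ne hne]

lemma upd_apply_i1 (w : Fin n → Fin N) (p : Fin N × Fin N) :
    upd i h w p ⟨(i : ℕ) + 1, h⟩ = p.2 := by
  simp [upd]

lemma upd_apply_other (w : Fin n → Fin N) (p : Fin N × Fin N) (k : Fin n)
    (hk1 : k ≠ i) (hk2 : k ≠ ⟨(i : ℕ) + 1, h⟩) :
    upd i h w p k = w k := by
  simp [upd, Function.update_of_ne hk1, Function.update_of_ne hk2]

lemma upd_apply_mem (w : Fin n → Fin N) (p : Fin N × Fin N) (k : Fin n)
    (hk : k ∈ Finset.univ.filter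
      (fun k : Fin n => (k : ℕ) ≠ (i : ℕ) ∧ (k : ℕ) ≠ (i : ℕ) + 1)) :
    upd i h w p k = w k := by
  simp only [Finset.mem_filter] at hk
  exact upd_apply_other i h w p k (by simp [Fin.ext_iff]; exact hk.2.1)
    (by simp [Fin.ext_iff]; exact hk.2.2)

lemma upd_inj (w : Fin n → Fin N) : Function.Injective (upd i h w) := by
  intro p q hpq
  have h1 := congrFun hpq i
  have h2 := congrFun hpq ⟨(i : ℕ) + 1, h⟩
  rw [upd_apply_i, upd_apply_i] at h1
  rw [upd_apply_i1, upd_apply_i1] at h2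
  exact Prod.ext h1 h2

lemma mem_image_upd (w u : Fin n → Fin N)
    (hu : ∀ k ∈ Finset.univ.filter
      (fun k : Fin n => (k : ℕ) ≠ (i : ℕ) ∧ (k : ℕ) ≠ (i : ℕ) + 1), u k = w k) :
    u = upd i h w (u i, u ⟨(i : ℕ) + 1, h⟩) := by
  funext k
  by_cases hk1 : k = i
  · subst hk1; rw [upd_apply_i]
  by_cases hk2 : k = (⟨(i : ℕ) + 1, h⟩ : Fin n)
  · subst hk2; rw [upd_apply_i1]
  · rw [upd_apply_other i h _ _ _ hk1 hk2]
    exact hu k (by simp only [Fin.ext_iff] at hk1 hk2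
                   simp only [Finset.mem_filter, Finset.mem_univ, true_and]
                   exact ⟨hk1, hk2⟩)

/-- Collapse a sum against the delta-pattern of `braidGen`. -/
lemma sum_collapse (w : Fin n → Fin N) (c : (Fin n → Fin N) → ℂ) :
    (∑ u, c u * ∏ k ∈ Finset.univ.filter
      (fun k : Fin n => (k : ℕ) ≠ (i : ℕ) ∧ (k : ℕ) ≠ (i : ℕ) + 1),
        (if u k = w k then (1 : ℂ) else 0)) =
    ∑ p : Fin N × Fin N, c (upd i h w p) := by
  have hsub := Finset.sum_subset
    (Finset.subset_univ ((Finset.univ : Finset (Fin N × Fin N)).image (upd i h w)))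
    (f := fun u => c u * ∏ k ∈ Finset.univ.filter
      (fun k : Fin n => (k : ℕ) ≠ (i : ℕ) ∧ (k : ℕ) ≠ (i : ℕ) + 1),
        (if u k = w k then (1 : ℂ) else 0))
    (by
      intro u _ hu
      by_cases hag : ∀ k ∈ Finset.univ.filter
          (fun k : Fin n => (k : ℕ) ≠ (i : ℕ) ∧ (k : ℕ) ≠ (i : ℕ) + 1), u k = w k
      · have hm := Finset.mem_image_of_mem (upd i h w)
          (Finset.mem_univ (u i, u ⟨(i : ℕ) + 1, h⟩))
        rw [← mem_image_upd i h w u hag] at hm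
        exact absurd hm hu
      · push_neg at hag
        obtain ⟨k, hk, hne⟩ := hag
        exact mul_eq_zero_of_right _ (Finset.prod_eq_zero hk (if_neg hne)))
  rw [← hsub, Finset.sum_image (fun x _ y _ hxy => upd_inj i h w hxy)]
  apply Finset.sum_congr rfl
  intro p _
  have : ∏ k ∈ Finset.univ.filter
      (fun k : Fin n => (k : ℕ) ≠ (i : ℕ) ∧ (k : ℕ) ≠ (i : ℕ) + 1),
      (if upd i h w p k = w k then (1 : ℂ) else 0) = 1 :=
    Finset.prod_eq_one fun k hk => if_pos (upd_apply_mem i h w p k hk)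
  rw [this, mul_one]

lemma piKron_mul_braidGen (F : Fin n → Matrix (Fin N) (Fin N) ℂ)
    (M : Matrix (Fin N × Fin N) (Fin N × Fin N) ℂ) :
    piKron F * braidGen M n i h = Matrix.of fun v w =>
      ((F i ⊗ₖ F ⟨(i : ℕ) + 1, h⟩) * M) (v i, v ⟨(i : ℕ) + 1, h⟩) (w i, w ⟨(i : ℕ) + 1, h⟩) *
        ∏ k ∈ Finset.univ.filter
          (fun k : Fin n => (k : ℕ) ≠ (i : ℕ) ∧ (k : ℕ) ≠ (i : ℕ) + 1),
          F k (v k) (w k) := by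
  ext v w
  simp only [Matrix.mul_apply, Matrix.of_apply, piKron, braidGen,
    Matrix.kroneckerMap_apply]
  have step1 : ∀ u : Fin n → Fin N,
      (∏ k, F k (v k) (u k)) *
        (M (u i, u ⟨(i : ℕ) + 1, h⟩) (w i, w ⟨(i : ℕ) + 1, h⟩) *
          ∏ k ∈ Finset.univ.filter
            (fun k : Fin n => (k : ℕ) ≠ (i : ℕ) ∧ (k : ℕ) ≠ (i : ℕ) + 1),
            (if u k = w k then (1 : ℂ) else 0)) =
      ((∏ k, F k (v k) (u k)) * M (u i, u ⟨(i : ℕ) + 1, h⟩) (w i, w ⟨(i : ℕ) + 1, h⟩)) *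
        ∏ k ∈ Finset.univ.filter
          (fun k : Fin n => (k : ℕ) ≠ (i : ℕ) ∧ (k : ℕ) ≠ (i : ℕ) + 1),
          (if u k = w k then (1 : ℂ) else 0) := fun u => by ring
  rw [Finset.sum_congr rfl fun u _ => step1 u,
    sum_collapse i h w (fun u =>
      (∏ k, F k (v k) (u k)) * M (u i, u ⟨(i : ℕ) + 1, h⟩) (w i, w ⟨(i : ℕ) + 1, h⟩)),
    Finset.sum_mul]
  apply Finset.sum_congr rfl
  intro p _
  rw [prod_split i h (fun k => F k (v k) (upd i h w p k)),
    Finset.prod_congr rfl (fun k hk => by rw [upd_apply_mem i h w p k hk]),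
    upd_apply_i, upd_apply_i1]
  rw [show ((p.1, p.2) : Fin N × Fin N) = p from rfl]
  ring

lemma braidGen_mul_piKron (F : Fin n → Matrix (Fin N) (Fin N) ℂ)
    (M : Matrix (Fin N × Fin N) (Fin N × Fin N) ℂ) :
    braidGen M n i h * piKron F = Matrix.of fun v w =>
      (M * (F i ⊗ₖ F ⟨(i : ℕ) + 1, h⟩)) (v i, v ⟨(i : ℕ) + 1, h⟩) (w i, w ⟨(i : ℕ) + 1, h⟩) *
        ∏ k ∈ Finset.univ.filter
          (fun k : Fin n => (k : ℕ) ≠ (i : ℕ) ∧ (k : ℕ) ≠ (i : ℕ) + 1),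
          F k (v k) (w k) := by
  ext v w
  simp only [Matrix.mul_apply, Matrix.of_apply, piKron, braidGen,
    Matrix.kroneckerMap_apply]
  have step1 : ∀ u : Fin n → Fin N,
      (M (v i, v ⟨(i : ℕ) + 1, h⟩) (u i, u ⟨(i : ℕ) + 1, h⟩) *
        ∏ k ∈ Finset.univ.filter
          (fun k : Fin n => (k : ℕ) ≠ (i : ℕ) ∧ (k : ℕ) ≠ (i : ℕ) + 1),
          (if v k = u k then (1 : ℂ) else 0)) *
        (∏ k, F k (u k) (w k)) =
      (M (v i, v ⟨(i : ℕ) + 1, h⟩) (u i, u ⟨(i : ℕ) + 1, h⟩) * ∏ k, F k (u k) (w k)) *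
        ∏ k ∈ Finset.univ.filter
          (fun k : Fin n => (k : ℕ) ≠ (i : ℕ) ∧ (k : ℕ) ≠ (i : ℕ) + 1),
          (if u k = v k then (1 : ℂ) else 0) := by
    intro u
    rw [Finset.prod_congr rfl (fun k _ => if_congr eq_comm rfl rfl)]
    ring
  rw [Finset.sum_congr rfl fun u _ => step1 u,
    sum_collapse i h v (fun u =>
      M (v i, v ⟨(i : ℕ) + 1, h⟩) (u i, u ⟨(i : ℕ) + 1, h⟩) * ∏ k, F k (u k) (w k)),
    Finset.sum_mul]
  apply Finset.sum_congr rfl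
  intro p _
  rw [prod_split i h (fun k => F k (upd i h v p k) (w k)),
    Finset.prod_congr rfl (fun k hk => by rw [upd_apply_mem i h v p k hk]),
    upd_apply_i, upd_apply_i1]
  rw [show ((p.1, p.2) : Fin N × Fin N) = p from rfl]
  ring

end braid

lemma kron_pow (A B : Matrix (Fin N) (Fin N) ℂ) (k : ℕ) :
    (A ⊗ₖ B) ^ k = (A ^ k) ⊗ₖ (B ^ k) := by
  induction k with
  | zero => simp [Matrix.one_kronecker_one]
  | succ k ih => rw [pow_succ, pow_succ, pow_succ, ih, Matrix.mul_kronecker_mul]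

end YBEAux

open YBEAux in
/-- if `Q ⊗ₖ Q` commutes with the invertible YBE solution `R` and
`S = (1 ⊗ₖ Q) R (1 ⊗ₖ Q⁻¹)`, then `Aₙ = Q⁰ ⊗ₖ ⋯ ⊗ₖ Q^{n-1}` conjugates
`ρₙᴿ(σᵢ)` to `ρₙˢ(σᵢ)` for all `i`, so `R` and `S` are ∞-equivalent. -/
theorem ds_equiv_is_infinity_equiv (N : ℕ)
    (R : Matrix (Fin N × Fin N) (Fin N × Fin N) ℂ)
    (hRu : IsUnit R) (hRY : SatisfiesYBE R)
    (Q : Matrix (Fin N) (Fin N) ℂ) (hQ : IsUnit Q)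
    (hcomm : (Q ⊗ₖ Q) * R = R * (Q ⊗ₖ Q))
    (S : Matrix (Fin N × Fin N) (Fin N × Fin N) ℂ)
    (hS : S = ((1 : Matrix (Fin N) (Fin N) ℂ) ⊗ₖ Q) * R *
      ((1 : Matrix (Fin N) (Fin N) ℂ) ⊗ₖ Q⁻¹))
    (n : ℕ) (hn : 2 ≤ n) :
    IsUnit (An Q n) ∧
      ∀ (i : Fin n) (h : (i : ℕ) + 1 < n),
        An Q n * braidGen R n i h * (An Q n)⁻¹ = braidGen S n i h := by
  have hQd : IsUnit Q.det := (Matrix.isUnit_iff_isUnit_det Q).mp hQ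
  have hAn : An Q n = piKron (fun k : Fin n => Q ^ (k : ℕ)) := rfl
  have hAinv : An Q n * piKron (fun k : Fin n => (Q ^ (k : ℕ))⁻¹) = 1 := by
    rw [hAn, piKron_mul]
    have : (fun k : Fin n => Q ^ (k : ℕ) * (Q ^ (k : ℕ))⁻¹) =
        fun _ : Fin n => (1 : Matrix (Fin N) (Fin N) ℂ) := by
      funext k
      exact Matrix.mul_nonsing_inv _ ((Matrix.isUnit_iff_isUnit_det _).mp (hQ.pow _))
    rw [this, piKron_one]
  have hAu : IsUnit (An Q n) := by
    have := invertibleOfRightInverse _ _ hAinv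
    exact isUnit_of_invertible _
  refine ⟨hAu, fun i h => ?_⟩
  have hkey : (Q ^ (i : ℕ)) ⊗ₖ (Q ^ ((i : ℕ) + 1)) * R =
      S * ((Q ^ (i : ℕ)) ⊗ₖ (Q ^ ((i : ℕ) + 1))) := by
    have hcp : (Q ^ (i : ℕ)) ⊗ₖ (Q ^ (i : ℕ)) * R = R * ((Q ^ (i : ℕ)) ⊗ₖ (Q ^ (i : ℕ))) := by
      have hc : Commute (Q ⊗ₖ Q) R := hcomm
      have := (hc.pow_left (i : ℕ)).eq
      rwa [kron_pow] at this
    have h1 : ((1 : Matrix (Fin N) (Fin N) ℂ) ⊗ₖ Q⁻¹) *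
        ((Q ^ (i : ℕ)) ⊗ₖ (Q ^ ((i : ℕ) + 1))) = (Q ^ (i : ℕ)) ⊗ₖ (Q ^ (i : ℕ)) := by
      rw [← Matrix.mul_kronecker_mul, one_mul, pow_succ', ← mul_assoc,
        Matrix.nonsing_inv_mul Q hQd, one_mul]
    have h2 : ((1 : Matrix (Fin N) (Fin N) ℂ) ⊗ₖ Q) *
        ((Q ^ (i : ℕ)) ⊗ₖ (Q ^ (i : ℕ))) = (Q ^ (i : ℕ)) ⊗ₖ (Q ^ ((i : ℕ) + 1)) := by
      rw [← Matrix.mul_kronecker_mul, one_mul, pow_succ']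
    rw [hS, mul_assoc (((1 : Matrix (Fin N) (Fin N) ℂ) ⊗ₖ Q) * R), h1, mul_assoc,
      ← hcp, ← mul_assoc, h2]
  have hmain : An Q n * braidGen R n i h = braidGen S n i h * An Q n := by
    rw [hAn, piKron_mul_braidGen i h _ R, braidGen_mul_piKron i h _ S]
    simp only [hkey]
  calc An Q n * braidGen R n i h * (An Q n)⁻¹
      = braidGen S n i h * (An Q n * (An Q n)⁻¹) := by rw [hmain, mul_assoc]
    _ = braidGen S n i h := by
        rw [Matrix.mul_nonsing_inv _ ((Matrix.isUnit_iff_isUnit_det _).mp hAu), mul_one]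
end

section
/- Let R be an invertible N²×N² complex matrix satisfying the Yang–Baxter equation, and let A be an N×N complex matrix of rank M such that (A ⊗ₖ A) * R = R * (A ⊗ₖ A). Then there exist an N×M matrix Q of rank M, an M×N matrix P of rank M, and an invertible M²×M² matrix S satisfying the Yang–Baxter equation, such that Q * P = A, R * (Q ⊗ₖ Q) = (Q ⊗ₖ Q) * S, and S * (P ⊗ₖ P) = (P ⊗ₖ P) * R. (That is, a rank-M endomorphism of the Yang–Baxter object (N,R) yields (M,S) that is simultaneously a subobject and a quotient object of (N,R).) -/
/-!
Factor `A = Q * P` through its image, with `Q` left invertible (`Q' * Q = 1`) and `P` right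
invertible (`P * P' = 1`). Since `A ⊗ₖ A = (Q ⊗ₖ Q) * (P ⊗ₖ P)` commutes with `R`, the matrix
`S = (P ⊗ₖ P) * R * (P' ⊗ₖ P')` is `R` restricted to the image of `A ⊗ₖ A`, and it is intertwined
with `R` by `Q ⊗ₖ Q` and by `P ⊗ₖ P`. Then `Q ⊗ₖ Q ⊗ₖ Q` intertwines `R₁, R₂` with `S₁, S₂`, and
being left cancellable it transports the Yang–Baxter equation from `R` to `S`.
-/

open Matrix Kronecker

open Module LinearMap in
theorem LinearMap.exists_comp_eq_of_finrank_range {K V W : Type*} [Field K] [AddCommGroup V]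
    [Module K V] [FiniteDimensional K V] [AddCommGroup W] [Module K W] (f : V →ₗ[K] W) {r : ℕ}
    (hr : finrank K (range f) = r) :
    ∃ (q : (Fin r → K) →ₗ[K] W) (p : V →ₗ[K] Fin r → K),
      ker q = ⊥ ∧ range p = ⊤ ∧ q ∘ₗ p = f := by
  let e := (Module.finBasisOfFinrankEq K _ hr).equivFun
  refine ⟨(range f).subtype ∘ₗ e.symm.toLinearMap, e.toLinearMap ∘ₗ f.rangeRestrict, ?_, ?_, ?_⟩
  · exact ker_eq_bot.2 ((range f).injective_subtype.comp e.symm.injective)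
  · exact range_eq_top.2 (e.surjective.comp f.surjective_rangeRestrict)
  · ext x
    simp

namespace Matrix

open LinearMap in
theorem exists_mul_eq_of_rank_eq {K m n : Type*} [Field K] [Fintype m] [Fintype n]
    (A : Matrix m n K) {r : ℕ} (hr : A.rank = r) :
    ∃ (Q : Matrix m (Fin r) K) (P : Matrix (Fin r) n K) (Q' : Matrix (Fin r) m K)
      (P' : Matrix n (Fin r) K), Q * P = A ∧ Q' * Q = 1 ∧ P * P' = 1 := by
  classical
  obtain ⟨q, p, hq, hp, hqp⟩ :=
    (toLin' A).exists_comp_eq_of_finrank_range (r := r) (by rwa [toLin'_apply'])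
  obtain ⟨q', hq'⟩ := q.exists_leftInverse_of_injective hq
  obtain ⟨p', hp'⟩ := p.exists_rightInverse_of_surjective hp
  refine ⟨toMatrix' q, toMatrix' p, toMatrix' q', toMatrix' p', ?_, ?_, ?_⟩
  · rw [← toMatrix'_comp, hqp, toMatrix'_toLin']
  · rw [← toMatrix'_comp, hq', toMatrix'_id]
  · rw [← toMatrix'_comp, hp', toMatrix'_id]

section Rank

variable {R m n : Type*} [CommSemiring R] [StrongRankCondition R] [Fintype m] [Fintype n]

theorem rank_eq_card_width_of_mul_eq_one [DecidableEq n] {Q' : Matrix n m R} {Q : Matrix m n R}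
    (hQ : Q' * Q = 1) : Q.rank = Fintype.card n :=
  le_antisymm Q.rank_le_card_width (by simpa [hQ] using rank_mul_le_right Q' Q)

theorem rank_eq_card_height_of_mul_eq_one [DecidableEq m] {P : Matrix m n R} {P' : Matrix n m R}
    (hP : P * P' = 1) : P.rank = Fintype.card m :=
  le_antisymm P.rank_le_card_height (by simpa [hP] using rank_mul_le_left P P')

end Rank

section Intertwining

variable {K m n : Type*} [Semiring K] [Fintype m] [Fintype n]

theorem mul_mul_mul_eq_of_mul_eq_mul {Q : Matrix m n K} {X₁ X₂ X₃ : Matrix m m K}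
    {Y₁ Y₂ Y₃ : Matrix n n K} (h₁ : X₁ * Q = Q * Y₁) (h₂ : X₂ * Q = Q * Y₂)
    (h₃ : X₃ * Q = Q * Y₃) : X₁ * X₂ * X₃ * Q = Q * (Y₁ * Y₂ * Y₃) := by
  rw [Matrix.mul_assoc, h₃, ← Matrix.mul_assoc, Matrix.mul_assoc X₁, h₂, ← Matrix.mul_assoc, h₁]
  simp only [Matrix.mul_assoc]

variable [DecidableEq n]

theorem eq_of_mul_eq_mul_of_mul_eq_one {o : Type*} {Q' : Matrix n m K} {Q : Matrix m n K}
    {X Y : Matrix n o K} (hQ : Q' * Q = 1) (h : Q * X = Q * Y) : X = Y := by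
  rw [← Matrix.one_mul X, ← hQ, Matrix.mul_assoc, h, ← Matrix.mul_assoc, hQ, Matrix.one_mul]

variable {T : Matrix m m K} {Q : Matrix m n K} {P : Matrix n m K} {P' : Matrix m n K}

theorem mul_eq_mul_mul_mul_of_commute (hP : P * P' = 1) (hT : Q * P * T = T * (Q * P)) :
    T * Q = Q * (P * T * P') :=
  calc T * Q = T * (Q * P) * P' := by rw [Matrix.mul_assoc, Matrix.mul_assoc, hP, Matrix.mul_one]
    _ = Q * (P * T * P') := by rw [← hT]; simp only [Matrix.mul_assoc]

theorem mul_mul_mul_eq_mul_of_commute {Q' : Matrix n m K} (hQ : Q' * Q = 1) (hP : P * P' = 1)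
    (hT : Q * P * T = T * (Q * P)) : P * T * P' * P = P * T := by
  refine eq_of_mul_eq_mul_of_mul_eq_one hQ ?_
  calc Q * (P * T * P' * P) = T * Q * P := by
        rw [mul_eq_mul_mul_mul_of_commute hP hT]; simp only [Matrix.mul_assoc]
    _ = Q * (P * T) := by rw [Matrix.mul_assoc, ← hT]; simp only [Matrix.mul_assoc]

end Intertwining

theorem isUnit_of_mul_eq_mul_of_mul_eq_one {K m n : Type*} [Semiring K] [IsStablyFiniteRing K] [Fintype m]
    [Fintype n] [DecidableEq m] [DecidableEq n] {S : Matrix n n K} {T : Matrix m m K} {P : Matrix n m K}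
    {P' : Matrix m n K} (hT : IsUnit T) (hP : P * P' = 1) (h : S * P = P * T) : IsUnit S := by
  obtain ⟨T', hT'⟩ := hT.exists_right_inv
  refine IsUnit.of_mul_eq_one (P * T' * P') ?_
  rw [← Matrix.mul_assoc, ← Matrix.mul_assoc, h, Matrix.mul_assoc P, hT', Matrix.mul_one, hP]

theorem kronecker_mul_kronecker_eq_one {K l m n o : Type*} [CommSemiring K] [Fintype m]
    [Fintype n] [DecidableEq l] [DecidableEq o] {A : Matrix l m K} {A' : Matrix m l K}
    {B : Matrix o n K} {B' : Matrix n o K} (hA : A * A' = 1) (hB : B * B' = 1) :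
    (A ⊗ₖ B) * (A' ⊗ₖ B') = 1 := by
  rw [← mul_kronecker_mul, hA, hB, one_kronecker_one]

end Matrix

section YangBaxter

variable {ι κ : Type*} [Fintype ι] [Fintype κ] [DecidableEq ι] [DecidableEq κ]
  {R : Matrix (ι × ι) (ι × ι) ℂ} {S : Matrix (κ × κ) (κ × κ) ℂ} {Q : Matrix ι κ ℂ}

theorem ybL_mul_kronecker (h : R * (Q ⊗ₖ Q) = (Q ⊗ₖ Q) * S) :
    ybL R * (Q ⊗ₖ (Q ⊗ₖ Q)) = (Q ⊗ₖ (Q ⊗ₖ Q)) * ybL S := by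
  rw [ybL, ybL, reindex_apply, reindex_apply, ← kronecker_assoc', submatrix_mul_equiv,
    submatrix_mul_equiv, ← mul_kronecker_mul, ← mul_kronecker_mul, h, Matrix.one_mul,
    Matrix.mul_one]

theorem ybR_mul_kronecker (h : R * (Q ⊗ₖ Q) = (Q ⊗ₖ Q) * S) :
    ybR R * (Q ⊗ₖ (Q ⊗ₖ Q)) = (Q ⊗ₖ (Q ⊗ₖ Q)) * ybR S := by
  rw [ybR, ybR, ← mul_kronecker_mul, ← mul_kronecker_mul, h, Matrix.one_mul, Matrix.mul_one]

theorem SatisfiesYBE.of_mul_kronecker_eq {Q' : Matrix κ ι ℂ} (hRY : SatisfiesYBE R)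
    (hQ : Q' * Q = 1) (h : R * (Q ⊗ₖ Q) = (Q ⊗ₖ Q) * S) : SatisfiesYBE S := by
  have hL := ybL_mul_kronecker h
  have hR := ybR_mul_kronecker h
  refine eq_of_mul_eq_mul_of_mul_eq_one
    (kronecker_mul_kronecker_eq_one hQ (kronecker_mul_kronecker_eq_one hQ hQ)) ?_
  rw [← mul_mul_mul_eq_of_mul_eq_mul hL hR hL, ← mul_mul_mul_eq_of_mul_eq_mul hR hL hR, hRY]

end YangBaxter

/-- a rank-`M` endomorphism `A` of the Yang–Baxter object `(N,R)`
yields an `(M,S)` that is simultaneously a subobject (via `Q`) and a quotient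
object (via `P`) of `(N,R)`, with `Q * P = A`. -/
theorem endo_gives_sub_and_quotient (N M : ℕ)
    (R : Matrix (Fin N × Fin N) (Fin N × Fin N) ℂ)
    (hRu : IsUnit R) (hRY : SatisfiesYBE R)
    (A : Matrix (Fin N) (Fin N) ℂ) (hArank : A.rank = M)
    (hcomm : (A ⊗ₖ A) * R = R * (A ⊗ₖ A)) :
    ∃ (Q : Matrix (Fin N) (Fin M) ℂ) (P : Matrix (Fin M) (Fin N) ℂ)
      (S : Matrix (Fin M × Fin M) (Fin M × Fin M) ℂ),
      Q.rank = M ∧ P.rank = M ∧ IsUnit S ∧ SatisfiesYBE S ∧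
      Q * P = A ∧
      R * (Q ⊗ₖ Q) = (Q ⊗ₖ Q) * S ∧
      S * (P ⊗ₖ P) = (P ⊗ₖ P) * R := by
  obtain ⟨Q, P, Q', P', hQP, hQ, hP⟩ := A.exists_mul_eq_of_rank_eq hArank
  have hQ₂ : (Q' ⊗ₖ Q') * (Q ⊗ₖ Q) = 1 := kronecker_mul_kronecker_eq_one hQ hQ
  have hP₂ : (P ⊗ₖ P) * (P' ⊗ₖ P') = 1 := kronecker_mul_kronecker_eq_one hP hP
  have hcomm₂ : (Q ⊗ₖ Q) * (P ⊗ₖ P) * R = R * ((Q ⊗ₖ Q) * (P ⊗ₖ P)) := by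
    rwa [← mul_kronecker_mul, hQP]
  have hRS := mul_eq_mul_mul_mul_of_commute hP₂ hcomm₂
  have hSP := mul_mul_mul_eq_mul_of_commute hQ₂ hP₂ hcomm₂
  refine ⟨Q, P, (P ⊗ₖ P) * R * (P' ⊗ₖ P'), ?_, ?_, isUnit_of_mul_eq_mul_of_mul_eq_one hRu hP₂ hSP,
    hRY.of_mul_kronecker_eq hQ hRS, hQP, hRS, hSP⟩
  · simpa using rank_eq_card_width_of_mul_eq_one hQ
  · simpa using rank_eq_card_height_of_mul_eq_one hP
end

section
/- Let R be an invertible N²×N² complex matrix satisfying the Yang–Baxter equation, let Q be an N×M complex matrix of rank M, and suppose the column space of Q ⊗ₖ Q is invariant under R. Then there is a unique M²×M² matrix S with R * (Q ⊗ₖ Q) = (Q ⊗ₖ Q) * S; moreover this S is invertible and satisfies the Yang–Baxter equation. (An R-invariant subspace of the form W ⊗ W yields a subobject of the Yang–Baxter object (N,R).) -/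
open Matrix Kronecker

set_option linter.unusedSectionVars false
section Aux
variable {k l m n m' n' a : Type*} [Fintype k] [Fintype l] [Fintype m] [Fintype n]
  [Fintype m'] [Fintype n'] [Fintype a]
  [DecidableEq m] [DecidableEq n] [DecidableEq k] [DecidableEq l]
  [DecidableEq m'] [DecidableEq n'] [DecidableEq a]

lemma matrix_eq_of_mulVecLin {A B : Matrix m n ℂ} (h : A.mulVecLin = B.mulVecLin) : A = B :=
  Matrix.toLin'.injective (by rwa [Matrix.toLin'_apply', Matrix.toLin'_apply'])

lemma cancel_left {A B : Matrix k m ℂ} {P : Matrix n k ℂ}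
    (hP : Function.Injective P.mulVecLin) (h : P * A = P * B) : A = B := by
  apply matrix_eq_of_mulVecLin
  have h2 := congrArg Matrix.mulVecLin h
  rw [Matrix.mulVecLin_mul, Matrix.mulVecLin_mul] at h2
  exact LinearMap.ext fun v => hP (LinearMap.congr_fun h2 v)

lemma exists_left_inv {A : Matrix m n ℂ} (hA : Function.Injective A.mulVecLin) :
    ∃ B : Matrix n m ℂ, B * A = 1 := by
  obtain ⟨g, hg⟩ := A.mulVecLin.exists_leftInverse_of_injective (LinearMap.ker_eq_bot.mpr hA)
  refine ⟨LinearMap.toMatrix' g, matrix_eq_of_mulVecLin ?_⟩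
  rw [Matrix.mulVecLin_mul, Matrix.mulVecLin_one, ← Matrix.toLin'_apply',
    Matrix.toLin'_toMatrix']
  exact hg

lemma inj_of_left_inv {A : Matrix m n ℂ} {B : Matrix n m ℂ} (h : B * A = 1) :
    Function.Injective A.mulVecLin := by
  intro x y hxy
  have h2 : (B * A).mulVecLin x = (B * A).mulVecLin y := by
    rw [Matrix.mulVecLin_mul]; simp [hxy]
  rwa [h, Matrix.mulVecLin_one] at h2

lemma kron_inj {A : Matrix m n ℂ} {A' : Matrix m' n' ℂ}
    (hA : Function.Injective A.mulVecLin) (hA' : Function.Injective A'.mulVecLin) :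
    Function.Injective (A ⊗ₖ A').mulVecLin := by
  obtain ⟨B, hB⟩ := exists_left_inv hA
  obtain ⟨B', hB'⟩ := exists_left_inv hA'
  apply inj_of_left_inv (B := B ⊗ₖ B')
  rw [← Matrix.mul_kronecker_mul, hB, hB', Matrix.one_kronecker_one]

lemma inj_of_rank {m n : ℕ} {A : Matrix (Fin m) (Fin n) ℂ} (h : A.rank = n) :
    Function.Injective A.mulVecLin := by
  rw [← LinearMap.ker_eq_bot]
  have hrn := A.mulVecLin.finrank_range_add_finrank_ker
  unfold Matrix.rank at h
  rw [h] at hrn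
  simp only [Module.finrank_pi, Fintype.card_fin] at hrn
  have h0 : Module.finrank ℂ (LinearMap.ker A.mulVecLin) = 0 := by omega
  exact Submodule.finrank_eq_zero.mp h0

lemma exists_intertwiner {A : Matrix n n ℂ} {P : Matrix n a ℂ}
    (hP : Function.Injective P.mulVecLin)
    (h : ∀ x ∈ LinearMap.range P.mulVecLin, A.mulVecLin x ∈ LinearMap.range P.mulVecLin) :
    ∃ S : Matrix a a ℂ, A * P = P * S := by
  set e := LinearEquiv.ofInjective P.mulVecLin hP with he
  set f := (A * P).mulVecLin with hf
  have hfr : ∀ x, f x ∈ LinearMap.range P.mulVecLin := by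
    intro x
    rw [hf, Matrix.mulVecLin_mul]
    exact h _ ⟨x, rfl⟩
  set g : (a → ℂ) →ₗ[ℂ] (a → ℂ) :=
    e.symm.toLinearMap ∘ₗ f.codRestrict (LinearMap.range P.mulVecLin) hfr with hg
  have h1 : ∀ z : LinearMap.range P.mulVecLin, P.mulVecLin (e.symm z) = z := by
    intro z
    obtain ⟨y, rfl⟩ : ∃ y, e y = z := ⟨e.symm z, e.apply_symm_apply z⟩
    rw [e.symm_apply_apply, he]
    exact (LinearEquiv.ofInjective_apply P.mulVecLin y).symm
  refine ⟨LinearMap.toMatrix' g, matrix_eq_of_mulVecLin ?_⟩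
  rw [show (P * LinearMap.toMatrix' g).mulVecLin
      = P.mulVecLin ∘ₗ (LinearMap.toMatrix' g).mulVecLin from Matrix.mulVecLin_mul _ _,
    show (LinearMap.toMatrix' g).mulVecLin = g from by
      rw [← Matrix.toLin'_apply', Matrix.toLin'_toMatrix']]
  refine LinearMap.ext fun x => ?_
  show f x = P.mulVecLin (g x)
  exact (h1 ⟨f x, hfr x⟩).symm

lemma intertwine_mul {P : Matrix n a ℂ} {A B : Matrix n n ℂ} {A' B' : Matrix a a ℂ}
    (hA : A * P = P * A') (hB : B * P = P * B') : (A * B) * P = P * (A' * B') := by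
  rw [Matrix.mul_assoc, hB, ← Matrix.mul_assoc, hA, Matrix.mul_assoc]

end Aux

/-- if the column space of `Q ⊗ₖ Q` (with `Q` of full rank `M`) is
invariant under the invertible YBE solution `R`, then there is a unique `S` with
`R (Q ⊗ₖ Q) = (Q ⊗ₖ Q) S`, and this `S` is invertible and satisfies the YBE. -/
theorem invariant_tensor_square_gives_subobject (N M : ℕ)
    (R : Matrix (Fin N × Fin N) (Fin N × Fin N) ℂ)
    (hRu : IsUnit R) (hRY : SatisfiesYBE R)
    (Q : Matrix (Fin N) (Fin M) ℂ) (hQrank : Q.rank = M)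
    (hinv : ∀ x ∈ LinearMap.range (Q ⊗ₖ Q).mulVecLin,
      R.mulVecLin x ∈ LinearMap.range (Q ⊗ₖ Q).mulVecLin) :
    (∃! S : Matrix (Fin M × Fin M) (Fin M × Fin M) ℂ,
        R * (Q ⊗ₖ Q) = (Q ⊗ₖ Q) * S) ∧
    ∀ S : Matrix (Fin M × Fin M) (Fin M × Fin M) ℂ,
      R * (Q ⊗ₖ Q) = (Q ⊗ₖ Q) * S → IsUnit S ∧ SatisfiesYBE S := by
  have hQinj : Function.Injective Q.mulVecLin := inj_of_rank hQrank
  have hPinj : Function.Injective (Q ⊗ₖ Q).mulVecLin := kron_inj hQinj hQinj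
  obtain ⟨S₀, hS₀⟩ := exists_intertwiner hPinj hinv
  refine ⟨⟨S₀, hS₀, fun S hS => cancel_left hPinj (hS.symm.trans hS₀)⟩, fun S hS => ?_⟩
  have hRL : (↑hRu.unit⁻¹ : Matrix _ _ ℂ) * R = 1 := by
    simpa only [hRu.unit_spec] using hRu.unit.inv_mul
  have hRR : R * (↑hRu.unit⁻¹ : Matrix _ _ ℂ) = 1 := by
    simpa only [hRu.unit_spec] using hRu.unit.mul_inv
  have hRinj : Function.Injective R.mulVecLin := inj_of_left_inv hRL
  -- invariance under the inverse of R
  let φ : LinearMap.range (Q ⊗ₖ Q).mulVecLin →ₗ[ℂ] LinearMap.range (Q ⊗ₖ Q).mulVecLin :=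
    R.mulVecLin.restrict (fun x hx => hinv x hx)
  have hφinj : Function.Injective φ := fun x y hxy =>
    Subtype.ext (hRinj (congrArg Subtype.val hxy))
  have hφsurj : Function.Surjective φ := (LinearMap.injective_iff_surjective).mp hφinj
  have hinv' : ∀ x ∈ LinearMap.range (Q ⊗ₖ Q).mulVecLin,
      (↑hRu.unit⁻¹ : Matrix _ _ ℂ).mulVecLin x ∈ LinearMap.range (Q ⊗ₖ Q).mulVecLin := by
    intro x hx
    obtain ⟨v, hv⟩ := hφsurj ⟨x, hx⟩
    have hv' : R.mulVecLin v.1 = x := congrArg Subtype.val hv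
    have hxv : (↑hRu.unit⁻¹ : Matrix _ _ ℂ).mulVecLin x = v.1 := by
      rw [← hv', ← LinearMap.comp_apply, ← Matrix.mulVecLin_mul, hRL, Matrix.mulVecLin_one,
        LinearMap.id_apply]
    rw [hxv]; exact v.2
  obtain ⟨T, hT⟩ := exists_intertwiner hPinj hinv'
  have hTS : T * S = 1 := cancel_left hPinj (by
    rw [← Matrix.mul_assoc, ← hT, Matrix.mul_assoc, ← hS, ← Matrix.mul_assoc, hRL,
      Matrix.one_mul, Matrix.mul_one])
  have hST : S * T = 1 := cancel_left hPinj (by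
    rw [← Matrix.mul_assoc, ← hS, Matrix.mul_assoc, ← hT, ← Matrix.mul_assoc, hRR,
      Matrix.one_mul, Matrix.mul_one])
  have hSu : IsUnit S := ⟨⟨S, T, hST, hTS⟩, rfl⟩
  -- YBE for S
  have hP3inj : Function.Injective (Q ⊗ₖ (Q ⊗ₖ Q)).mulVecLin := kron_inj hQinj hPinj
  have hR3 : ybR R * (Q ⊗ₖ (Q ⊗ₖ Q)) = (Q ⊗ₖ (Q ⊗ₖ Q)) * ybR S := by
    show (1 : Matrix (Fin N) (Fin N) ℂ) ⊗ₖ R * (Q ⊗ₖ (Q ⊗ₖ Q))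
        = Q ⊗ₖ (Q ⊗ₖ Q) * ((1 : Matrix (Fin M) (Fin M) ℂ) ⊗ₖ S)
    rw [← Matrix.mul_kronecker_mul, ← Matrix.mul_kronecker_mul, Matrix.one_mul,
      Matrix.mul_one, hS]
  have hL3 : ybL R * (Q ⊗ₖ (Q ⊗ₖ Q)) = (Q ⊗ₖ (Q ⊗ₖ Q)) * ybL S := by
    have e1 : (Q ⊗ₖ (Q ⊗ₖ Q) : Matrix (Fin N × Fin N × Fin N) (Fin M × Fin M × Fin M) ℂ)
        = ((Q ⊗ₖ Q) ⊗ₖ Q).submatrix (Equiv.prodAssoc (Fin N) (Fin N) (Fin N)).symm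
            (Equiv.prodAssoc (Fin M) (Fin M) (Fin M)).symm :=
      (Matrix.kronecker_assoc' Q Q Q).symm
    rw [ybL, ybL, e1, Matrix.reindex_apply, Matrix.reindex_apply,
      Matrix.submatrix_mul_equiv, Matrix.submatrix_mul_equiv,
      ← Matrix.mul_kronecker_mul, ← Matrix.mul_kronecker_mul, Matrix.one_mul,
      Matrix.mul_one, hS]
  have hY1 : (ybL R * ybR R * ybL R) * (Q ⊗ₖ (Q ⊗ₖ Q))
      = (Q ⊗ₖ (Q ⊗ₖ Q)) * (ybL S * ybR S * ybL S) :=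
    intertwine_mul (intertwine_mul hL3 hR3) hL3
  have hY2 : (ybR R * ybL R * ybR R) * (Q ⊗ₖ (Q ⊗ₖ Q))
      = (Q ⊗ₖ (Q ⊗ₖ Q)) * (ybR S * ybL S * ybR S) :=
    intertwine_mul (intertwine_mul hR3 hL3) hR3
  have hfin : (Q ⊗ₖ (Q ⊗ₖ Q)) * (ybL S * ybR S * ybL S)
      = (Q ⊗ₖ (Q ⊗ₖ Q)) * (ybR S * ybL S * ybR S) := by
    rw [← hY1, ← hY2, hRY]
  exact ⟨hSu, cancel_left hP3inj hfin⟩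
end

section
/- Let R be an N²×N² permutation matrix satisfying the Yang–Baxter equation. Let Q be the N²×1 matrix (column vector) Σᵢ eᵢ ⊗ eᵢ and let P = Qᵀ. Then (R ⊠ R) * (Q ⊗ₖ Q) = Q ⊗ₖ Q, (P ⊗ₖ P) * (R ⊠ R) = P ⊗ₖ P, and the snake identities (P ⊗ₖ 1ₙ)(1ₙ ⊗ₖ Q) = 1ₙ and (1ₙ ⊗ₖ P)(Q ⊗ₖ 1ₙ) = 1ₙ hold (after the canonical reindexings). Hence every permutation (set-theoretic) Yang–Baxter object (N,R) is self-dual in YB(Mat), with coevaluation Q and evaluation P. -/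
open Matrix Kronecker

/-- A permutation matrix: 0/1 entries with exactly one nonzero entry in each
row and each column. -/
def IsPermMatrix {ι : Type*} (R : Matrix ι ι ℂ) : Prop :=
  (∀ i j, R i j = 0 ∨ R i j = 1) ∧ (∀ i, ∃! j, R i j ≠ 0) ∧ (∀ j, ∃! i, R i j ≠ 0)

/-- The column vector `Σᵢ eᵢ ⊗ eᵢ ∈ ℂ^N ⊗ ℂ^N`, as an `N² × 1` matrix. -/
def coevMat (N : ℕ) : Matrix (Fin N × Fin N) (Fin 1) ℂ :=
  Matrix.of fun p _ => if p.1 = p.2 then 1 else 0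


lemma perm_mul_transpose_aux {ι : Type*} [Fintype ι] [DecidableEq ι]
    (R : Matrix ι ι ℂ) (h : IsPermMatrix R) : R * Rᵀ = 1 := by
  obtain ⟨h01, hrow, hcol⟩ := h
  ext u v
  rw [Matrix.mul_apply]
  obtain ⟨ju, hju, hju'⟩ := hrow u
  by_cases huv : u = v
  · subst huv
    rw [Finset.sum_eq_single ju ?_ (by simp)]
    · rcases h01 u ju with h | h
      · exact absurd h hju
      · simp [Matrix.one_apply, Matrix.transpose_apply, h]
    · intro p _ hp
      rcases h01 u p with h | h
      · simp [h]
      · exact absurd (hju' p (by simp [h])) hp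
  · rw [Matrix.one_apply_ne huv, Finset.sum_eq_zero]
    intro p _
    by_cases h1 : R u p = 0
    · simp [h1]
    by_cases h2 : R v p = 0
    · simp [h2]
    obtain ⟨i, -, hi⟩ := hcol p
    exact absurd ((hi u h1).trans (hi v h2).symm) huv

/-- every permutation (set-theoretic) Yang–Baxter object `(N,R)` is
self-dual, with coevaluation `Q = Σᵢ eᵢ ⊗ eᵢ` and evaluation `P = Qᵀ`: `Q ⊗ₖ Q`
is fixed by `R ⊠ R`, `P ⊗ₖ P` is fixed by right multiplication by `R ⊠ R`, and
the snake identities hold (after the canonical reindexings). -/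
theorem perm_ybo_self_dual (N : ℕ)
    (R : Matrix (Fin N × Fin N) (Fin N × Fin N) ℂ)
    (hperm : IsPermMatrix R) (hRY : SatisfiesYBE R) :
    lashing R R * (coevMat N ⊗ₖ coevMat N) = coevMat N ⊗ₖ coevMat N ∧
    ((coevMat N)ᵀ ⊗ₖ (coevMat N)ᵀ) * lashing R R = (coevMat N)ᵀ ⊗ₖ (coevMat N)ᵀ ∧
    (Matrix.reindex (Equiv.refl (Fin 1 × Fin N)) (Equiv.prodAssoc (Fin N) (Fin N) (Fin N))
        ((coevMat N)ᵀ ⊗ₖ (1 : Matrix (Fin N) (Fin N) ℂ))) *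
      ((1 : Matrix (Fin N) (Fin N) ℂ) ⊗ₖ coevMat N)
      = Matrix.of (fun (p : Fin 1 × Fin N) (q : Fin N × Fin 1) =>
          if p.2 = q.1 then 1 else 0) ∧
    ((1 : Matrix (Fin N) (Fin N) ℂ) ⊗ₖ (coevMat N)ᵀ) *
      (Matrix.reindex (Equiv.prodAssoc (Fin N) (Fin N) (Fin N)) (Equiv.refl (Fin 1 × Fin N))
        (coevMat N ⊗ₖ (1 : Matrix (Fin N) (Fin N) ℂ)))
      = Matrix.of (fun (p : Fin N × Fin 1) (q : Fin 1 × Fin N) =>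
          if p.1 = q.2 then 1 else 0) := by
  have hRRT : R * Rᵀ = 1 := perm_mul_transpose_aux R hperm
  have hRTR : Rᵀ * R = 1 := mul_eq_one_comm.mp hRRT
  have key : ∀ u v, ∑ p : Fin N × Fin N, R u p * R v p = if u = v then 1 else 0 := by
    intro u v
    have := congrFun (congrFun hRRT u) v
    simpa [Matrix.mul_apply, Matrix.one_apply] using this
  have keyc : ∀ u v, ∑ p : Fin N × Fin N, R p u * R p v = if u = v then 1 else 0 := by
    intro u v
    have := congrFun (congrFun hRTR u) v
    simpa [Matrix.mul_apply, Matrix.one_apply] using this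
  have key' : ∀ u v : Fin N × Fin N,
      (∑ i : Fin N, ∑ k : Fin N, R u (i, k) * R v (i, k)) = if u = v then 1 else 0 := by
    intro u v
    rw [← key u v, Fintype.sum_prod_type]
  have keyc' : ∀ u v : Fin N × Fin N,
      (∑ i : Fin N, ∑ k : Fin N, R (i, k) u * R (i, k) v) = if u = v then 1 else 0 := by
    intro u v
    rw [← keyc u v, Fintype.sum_prod_type]
  refine ⟨?_, ?_, ?_, ?_⟩
  · ext ⟨⟨a, b⟩, ⟨c, d⟩⟩ ⟨x, y⟩
    simp only [Matrix.mul_apply, lashing, Matrix.reindex_apply, Matrix.submatrix_apply,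
      Equiv.prodProdProdComm_symm, Equiv.prodProdProdComm_apply, Matrix.kroneckerMap_apply,
      coevMat, Matrix.of_apply]
    rw [Fintype.sum_prod_type]
    simp only [Fintype.sum_prod_type]
    simp only [mul_ite, mul_one, mul_zero, ite_mul, zero_mul, one_mul,
      Finset.sum_ite_eq, Finset.sum_ite_eq', Finset.sum_ite_irrel, Finset.sum_const_zero,
      Finset.mem_univ, if_true]
    rw [key' (a, c) (b, d)]
    by_cases h1 : a = b <;> by_cases h2 : c = d <;> simp [h1, h2, Prod.ext_iff, ite_and]
  · ext ⟨x, y⟩ ⟨⟨i, j⟩, ⟨k, l⟩⟩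
    simp only [Matrix.mul_apply, lashing, Matrix.reindex_apply, Matrix.submatrix_apply,
      Equiv.prodProdProdComm_symm, Equiv.prodProdProdComm_apply, Matrix.kroneckerMap_apply,
      coevMat, Matrix.transpose_apply, Matrix.of_apply]
    rw [Fintype.sum_prod_type]
    simp only [Fintype.sum_prod_type]
    simp only [mul_ite, mul_one, mul_zero, ite_mul, zero_mul, one_mul,
      Finset.sum_ite_eq, Finset.sum_ite_eq', Finset.sum_ite_irrel, Finset.sum_const_zero,
      Finset.mem_univ, if_true]
    rw [keyc' (i, k) (j, l)]
    by_cases h1 : i = j <;> by_cases h2 : k = l <;> simp [h1, h2, Prod.ext_iff, ite_and]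
  · ext ⟨x, a⟩ ⟨b, j⟩
    simp only [Matrix.mul_apply, Matrix.reindex_apply, Matrix.submatrix_apply,
      Matrix.kroneckerMap_apply, coevMat, Matrix.transpose_apply, Matrix.of_apply,
      Matrix.one_apply, Equiv.refl_symm, Equiv.refl_apply]
    rw [Fintype.sum_prod_type]
    simp only [Fintype.sum_prod_type, Equiv.prodAssoc_symm_apply]
    simp only [mul_ite, mul_one, mul_zero, ite_mul, zero_mul, one_mul,
      Finset.sum_ite_eq, Finset.sum_ite_eq', Finset.sum_ite_irrel, Finset.sum_const_zero,
      Finset.mem_univ, if_true]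
    simp [eq_comm]
  · ext ⟨a, j⟩ ⟨x, b⟩
    simp only [Matrix.mul_apply, Matrix.reindex_apply, Matrix.submatrix_apply,
      Matrix.kroneckerMap_apply, coevMat, Matrix.transpose_apply, Matrix.of_apply,
      Matrix.one_apply, Equiv.refl_symm, Equiv.refl_apply]
    rw [Fintype.sum_prod_type]
    simp only [Fintype.sum_prod_type, Equiv.prodAssoc_symm_apply]
    simp only [mul_ite, mul_one, mul_zero, ite_mul, zero_mul, one_mul,
      Finset.sum_ite_eq, Finset.sum_ite_eq', Finset.sum_ite_irrel, Finset.sum_const_zero,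
      Finset.mem_univ, if_true]
end

section
/- Let R be an N²×N² complex matrix of group type with respect to invertible N×N matrices g₁,…,g_N (i.e., R(eᵢ ⊗ eⱼ) = (gᵢ eⱼ) ⊗ eᵢ for all i, j), and let S be an M²×M² complex matrix of group type with respect to invertible M×M matrices h₁,…,h_M. Then the lashing product R ⊠ S is of group type with respect to the family of invertible NM×NM matrices (gᵢ ⊗ₖ hₖ) indexed by pairs (i,k) ∈ Fin N × Fin M: namely (R ⊠ S)((eᵢ ⊗ fₖ) ⊗ (eⱼ ⊗ fₗ)) = ((gᵢ ⊗ₖ hₖ)(eⱼ ⊗ fₗ)) ⊗ (eᵢ ⊗ fₖ). -/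
open Matrix Kronecker

/-- `R` is of group type with respect to the family `g`:
`R (eᵢ ⊗ eⱼ) = (gᵢ eⱼ) ⊗ eᵢ`, stated entrywise. -/
def IsGroupType {ι : Type*} [DecidableEq ι]
    (R : Matrix (ι × ι) (ι × ι) ℂ) (g : ι → Matrix ι ι ℂ) : Prop :=
  ∀ i j a b, R (a, b) (i, j) = g i a j * (if b = i then 1 else 0)

/-- the lashing product of group-type matrices is of group type,
with respect to the family of invertible matrices `gᵢ ⊗ₖ hₖ`. -/
theorem lashing_of_group_type (N M : ℕ)
    (R : Matrix (Fin N × Fin N) (Fin N × Fin N) ℂ)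
    (S : Matrix (Fin M × Fin M) (Fin M × Fin M) ℂ)
    (g : Fin N → Matrix (Fin N) (Fin N) ℂ) (hg : ∀ i, IsUnit (g i))
    (h : Fin M → Matrix (Fin M) (Fin M) ℂ) (hh : ∀ k, IsUnit (h k))
    (hRg : IsGroupType R g) (hSh : IsGroupType S h) :
    (∀ ik : Fin N × Fin M, IsUnit (g ik.1 ⊗ₖ h ik.2)) ∧
      IsGroupType (lashing R S) (fun ik : Fin N × Fin M => g ik.1 ⊗ₖ h ik.2) := by
  constructor
  · rintro ⟨i, k⟩
    rw [Matrix.isUnit_iff_isUnit_det, Matrix.det_kronecker]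
    exact ((Matrix.isUnit_iff_isUnit_det _).mp (hg i)).pow _ |>.mul
      (((Matrix.isUnit_iff_isUnit_det _).mp (hh k)).pow _)
  · rintro ⟨i, k⟩ ⟨j, l⟩ ⟨a, b⟩ ⟨c, d⟩
    simp only [lashing, Matrix.reindex_apply, Matrix.submatrix_apply,
      Equiv.prodProdProdComm, Equiv.coe_fn_symm_mk, Matrix.kroneckerMap_apply]
    rw [hRg, hSh]
    simp only [Prod.mk.injEq]
    by_cases hc : c = i <;> by_cases hd : d = k <;> simp [hc, hd]
end

section
/- Let R be an invertible N²×N² complex matrix satisfying the Yang–Baxter equation. On (ℂ^N)^{⊗4}, set Rⱼ = 1ₙ^{⊗(j−1)} ⊗ₖ R ⊗ₖ 1ₙ^{⊗(3−j)} for j = 1, 2, 3, and define the 2-cabling R^{(2)} := R₂ * R₁ * R₃ * R₂. Then R^{(2)}, regarded (via the canonical identification (ℂ^N)^{⊗4} ≅ (ℂ^{N²})^{⊗2}) as an (N²)²×(N²)² matrix, satisfies the Yang–Baxter equation: on (ℂ^N)^{⊗6}, (R^{(2)} ⊗ₖ 1_{N²}) * (1_{N²} ⊗ₖ R^{(2)})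 * (R^{(2)} ⊗ₖ 1_{N²}) = (1_{N²} ⊗ₖ R^{(2)}) * (R^{(2)} ⊗ₖ 1_{N²}) * (1_{N²} ⊗ₖ R^{(2)}), after the canonical reindexings. -/
open Matrix Kronecker

/-- `R₁ = R ⊗ₖ 1 ⊗ₖ 1` on `(ℂ^N)^{⊗4}`, entrywise. -/
def cab1 {N : ℕ} (R : Matrix (Fin N × Fin N) (Fin N × Fin N) ℂ) :
    Matrix (Fin N × Fin N × Fin N × Fin N) (Fin N × Fin N × Fin N × Fin N) ℂ :=
  Matrix.of fun p q =>
    R (p.1, p.2.1) (q.1, q.2.1) *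
      (if p.2.2.1 = q.2.2.1 then 1 else 0) * (if p.2.2.2 = q.2.2.2 then 1 else 0)

/-- `R₂ = 1 ⊗ₖ R ⊗ₖ 1` on `(ℂ^N)^{⊗4}`, entrywise. -/
def cab2 {N : ℕ} (R : Matrix (Fin N × Fin N) (Fin N × Fin N) ℂ) :
    Matrix (Fin N × Fin N × Fin N × Fin N) (Fin N × Fin N × Fin N × Fin N) ℂ :=
  Matrix.of fun p q =>
    (if p.1 = q.1 then 1 else 0) *
      R (p.2.1, p.2.2.1) (q.2.1, q.2.2.1) * (if p.2.2.2 = q.2.2.2 then 1 else 0)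

/-- `R₃ = 1 ⊗ₖ 1 ⊗ₖ R` on `(ℂ^N)^{⊗4}`, entrywise. -/
def cab3 {N : ℕ} (R : Matrix (Fin N × Fin N) (Fin N × Fin N) ℂ) :
    Matrix (Fin N × Fin N × Fin N × Fin N) (Fin N × Fin N × Fin N × Fin N) ℂ :=
  Matrix.of fun p q =>
    (if p.1 = q.1 then 1 else 0) * (if p.2.1 = q.2.1 then 1 else 0) *
      R (p.2.2.1, p.2.2.2) (q.2.2.1, q.2.2.2)

/-- The 2-cabling `R⁽²⁾ = R₂ R₁ R₃ R₂`, regarded as an `(N²)² × (N²)²` matrix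
via the canonical identification `(ℂ^N)^{⊗4} ≅ (ℂ^{N²})^{⊗2}`. -/
noncomputable def twoCabling {N : ℕ} (R : Matrix (Fin N × Fin N) (Fin N × Fin N) ℂ) :
    Matrix ((Fin N × Fin N) × (Fin N × Fin N)) ((Fin N × Fin N) × (Fin N × Fin N)) ℂ :=
  Matrix.reindex (Equiv.prodAssoc (Fin N) (Fin N) (Fin N × Fin N)).symm
    (Equiv.prodAssoc (Fin N) (Fin N) (Fin N × Fin N)).symm
    (cab2 R * cab1 R * cab3 R * cab2 R)


section CablingAux

open Matrix Kronecker

private theorem cabword {M : Type*} [Monoid M] (s1 s2 s3 s4 s5 : M)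
    (b1 : s1*s2*s1 = s2*s1*s2) (b2 : s2*s3*s2 = s3*s2*s3)
    (b3 : s3*s4*s3 = s4*s3*s4) (b4 : s4*s5*s4 = s5*s4*s5)
    (c13 : s1*s3 = s3*s1) (c14 : s1*s4 = s4*s1) (c15 : s1*s5 = s5*s1)
    (c24 : s2*s4 = s4*s2) (c25 : s2*s5 = s5*s2) (c35 : s3*s5 = s5*s3) :
    s2*s1*s3*s2*(s4*s3*s5*s4)*(s2*s1*s3*s2)
      = s4*s3*s5*s4*(s2*s1*s3*s2)*(s4*s3*s5*s4) := by
  have hc : ∀ (a b : M), a*b = b*a → ∀ x : M, a*(b*x) = b*(a*x) := by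
    intro a b h x; rw [← mul_assoc, h, mul_assoc]
  have hb : ∀ (a b : M), a*b*a = b*a*b → ∀ x : M, a*(b*(a*x)) = b*(a*(b*x)) := by
    intro a b h x; rw [← mul_assoc, ← mul_assoc, h, mul_assoc, mul_assoc]
  simp only [mul_assoc]
  conv_lhs => enter [2,2,2]; rw [hc s2 s4 (c24)]
  conv_lhs => enter [2,2,2,2,2,2,2]; rw [hc s4 s2 (c24.symm)]
  conv_lhs => enter [2,2,2,2,2,2]; rw [hc s5 s2 (c25.symm)]
  conv_lhs => enter [2,2,2,2,2,2,2,2]; rw [hc s4 s1 (c14.symm)]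
  conv_lhs => enter [2,2,2,2,2,2,2]; rw [hc s5 s1 (c15.symm)]
  conv_lhs => enter [2,2,2,2]; rw [hb s2 s3 b2]
  conv_lhs => enter [2,2,2,2,2,2]; rw [hc s3 s1 (c13.symm)]
  conv_lhs => enter [2,2,2,2,2,2,2]; rw [hc s3 s5 (c35)]
  conv_lhs => enter [2,2]; rw [hb s3 s4 b3]
  conv_lhs => enter [2]; rw [hc s1 s4 (c14)]
  conv_lhs => rw [hc s2 s4 (c24)]
  conv_lhs => enter [2,2]; rw [hc s1 s3 (c13)]
  conv_lhs => enter [2,2,2,2]; rw [hc s4 s2 (c24.symm)]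
  conv_lhs => enter [2,2,2,2,2]; rw [hc s4 s1 (c14.symm)]
  conv_lhs => enter [2,2,2]; rw [hb s1 s2 b1]
  conv_lhs => enter [2]; rw [hb s2 s3 b2]
  conv_lhs => enter [2,2,2]; rw [hc s3 s1 (c13.symm)]
  conv_lhs => enter [2,2,2,2,2,2,2,2]; rw [hb s3 s4 b3]
  conv_lhs => enter [2,2,2,2,2,2,2,2,2,2]; rw [(by rw [c24.symm] : s4*s2 = s2*s4)]
  conv_lhs => enter [2,2,2,2,2,2]; rw [hb s4 s5 b4]
  conv_lhs => enter [2,2,2,2,2]; rw [hc s2 s5 (c25)]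
  conv_lhs => enter [2,2,2,2]; rw [hc s3 s5 (c35)]
  conv_lhs => enter [2,2,2]; rw [hc s1 s5 (c15)]
  conv_lhs => enter [2,2]; rw [hc s2 s5 (c25)]
  conv_lhs => enter [2,2,2,2,2,2]; rw [hc s2 s4 (c24)]
  conv_lhs => enter [2,2,2,2,2,2,2,2]; rw [hc s5 s3 (c35.symm)]
  conv_lhs => enter [2,2,2,2,2,2,2,2,2]; rw [hc s5 s2 (c25.symm)]
  conv_lhs => enter [2,2,2,2,2,2,2]; rw [hb s2 s3 b2]
  conv_lhs => enter [2,2,2,2,2]; rw [hb s3 s4 b3]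
  conv_lhs => enter [2,2,2,2]; rw [hc s1 s4 (c14)]
  conv_lhs => enter [2,2,2]; rw [hc s2 s4 (c24)]
  conv_lhs => enter [2,2,2,2,2,2,2]; rw [hc s4 s2 (c24.symm)]


variable {N : ℕ}

private abbrev J2 (N : ℕ) := Fin N × Fin N
private abbrev J3 (N : ℕ) := Fin N × Fin N × Fin N
private abbrev J4 (N : ℕ) := Fin N × Fin N × Fin N × Fin N
private abbrev J6 (N : ℕ) := (Fin N × Fin N) × (Fin N × Fin N) × (Fin N × Fin N)

private def e1 : (J3 N) × (J3 N) ≃ J6 N where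
  toFun := fun x => ((x.1.1, x.1.2.1), (x.1.2.2, x.2.1), (x.2.2.1, x.2.2.2))
  invFun := fun x => ((x.1.1, x.1.2, x.2.1.1), (x.2.1.2, x.2.2.1, x.2.2.2))
  left_inv := by rintro ⟨⟨a, b, c⟩, ⟨d, e, f⟩⟩; rfl
  right_inv := by rintro ⟨⟨a, b⟩, ⟨c, d⟩, ⟨e, f⟩⟩; rfl

private def e2 : Fin N × ((J3 N) × (J2 N)) ≃ J6 N where
  toFun := fun x => ((x.1, x.2.1.1), (x.2.1.2.1, x.2.1.2.2), (x.2.2.1, x.2.2.2))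
  invFun := fun x => (x.1.1, ((x.1.2, x.2.1.1, x.2.1.2), (x.2.2.1, x.2.2.2)))
  left_inv := by rintro ⟨a, ⟨⟨b, c, d⟩, ⟨e, f⟩⟩⟩; rfl
  right_inv := by rintro ⟨⟨a, b⟩, ⟨c, d⟩, ⟨e, f⟩⟩; rfl

private def e3 : (J2 N) × ((J3 N) × Fin N) ≃ J6 N where
  toFun := fun x => ((x.1.1, x.1.2), (x.2.1.1, x.2.1.2.1), (x.2.1.2.2, x.2.2))
  invFun := fun x => ((x.1.1, x.1.2), ((x.2.1.1, x.2.1.2, x.2.2.1), x.2.2.2))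
  left_inv := by rintro ⟨⟨a, b⟩, ⟨⟨c, d, e⟩, f⟩⟩; rfl
  right_inv := by rintro ⟨⟨a, b⟩, ⟨c, d⟩, ⟨e, f⟩⟩; rfl

private def f4 : (J4 N) × (J2 N) ≃ J6 N where
  toFun := fun x => ((x.1.1, x.1.2.1), (x.1.2.2.1, x.1.2.2.2), (x.2.1, x.2.2))
  invFun := fun x => ((x.1.1, x.1.2, x.2.1.1, x.2.1.2), (x.2.2.1, x.2.2.2))
  left_inv := by rintro ⟨⟨a, b, c, d⟩, ⟨e, f⟩⟩; rfl
  right_inv := by rintro ⟨⟨a, b⟩, ⟨c, d⟩, ⟨e, f⟩⟩; rfl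

private def f4' : (J2 N) × (J4 N) ≃ J6 N where
  toFun := fun x => ((x.1.1, x.1.2), (x.2.1, x.2.2.1), (x.2.2.2.1, x.2.2.2.2))
  invFun := fun x => ((x.1.1, x.1.2), (x.2.1.1, x.2.1.2, x.2.2.1, x.2.2.2))
  left_inv := by rintro ⟨⟨a, b⟩, ⟨c, d, e, f⟩⟩; rfl
  right_inv := by rintro ⟨⟨a, b⟩, ⟨c, d⟩, ⟨e, f⟩⟩; rfl

variable (R : Matrix (Fin N × Fin N) (Fin N × Fin N) ℂ)

private noncomputable def S1 : Matrix (J6 N) (J6 N) ℂ :=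
  R ⊗ₖ (1 : Matrix ((J2 N) × (J2 N)) ((J2 N) × (J2 N)) ℂ)

private noncomputable def S2 : Matrix (J6 N) (J6 N) ℂ :=
  Matrix.reindex e2 e2
    ((1 : Matrix (Fin N) (Fin N) ℂ) ⊗ₖ (ybL R ⊗ₖ (1 : Matrix (J2 N) (J2 N) ℂ)))

private noncomputable def S3 : Matrix (J6 N) (J6 N) ℂ :=
  (1 : Matrix (J2 N) (J2 N) ℂ) ⊗ₖ (R ⊗ₖ (1 : Matrix (J2 N) (J2 N) ℂ))

private noncomputable def S4 : Matrix (J6 N) (J6 N) ℂ :=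
  Matrix.reindex e1 e1 ((1 : Matrix (J3 N) (J3 N) ℂ) ⊗ₖ ybL R)

private noncomputable def S5 : Matrix (J6 N) (J6 N) ℂ :=
  (1 : Matrix (J2 N) (J2 N) ℂ) ⊗ₖ ((1 : Matrix (J2 N) (J2 N) ℂ) ⊗ₖ R)

private theorem reindex_mul {m n : Type*} [Fintype m] [Fintype n] [DecidableEq m] [DecidableEq n]
    (e : m ≃ n) (A B : Matrix m m ℂ) :
    Matrix.reindex e e A * Matrix.reindex e e B = Matrix.reindex e e (A * B) := by
  simp [Matrix.reindex_apply, Matrix.submatrix_mul_equiv]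

private theorem kron_comm {m n : Type*} [Fintype m] [Fintype n] [DecidableEq m] [DecidableEq n]
    (A : Matrix m m ℂ) (B : Matrix n n ℂ) :
    (A ⊗ₖ (1 : Matrix n n ℂ)) * ((1 : Matrix m m ℂ) ⊗ₖ B)
      = ((1 : Matrix m m ℂ) ⊗ₖ B) * (A ⊗ₖ (1 : Matrix n n ℂ)) := by
  rw [← Matrix.mul_kronecker_mul, ← Matrix.mul_kronecker_mul, one_mul, mul_one, one_mul, mul_one]

private theorem kron1_mul {m n : Type*} [Fintype m] [Fintype n] [DecidableEq n]
    (A B : Matrix m m ℂ) :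
    (A ⊗ₖ (1 : Matrix n n ℂ)) * (B ⊗ₖ (1 : Matrix n n ℂ)) = (A * B) ⊗ₖ 1 := by
  rw [← Matrix.mul_kronecker_mul, one_mul]

private theorem mul_1kron {m n : Type*} [Fintype m] [Fintype n] [DecidableEq m]
    (A B : Matrix n n ℂ) :
    ((1 : Matrix m m ℂ) ⊗ₖ A) * ((1 : Matrix m m ℂ) ⊗ₖ B) = 1 ⊗ₖ (A * B) := by
  rw [← Matrix.mul_kronecker_mul, one_mul]

-- representation lemmas
private theorem S1e1 : S1 R = Matrix.reindex e1 e1 (ybL R ⊗ₖ (1 : Matrix (J3 N) (J3 N) ℂ)) := by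
  ext ⟨⟨a, b⟩, ⟨c, d⟩, ⟨e, f⟩⟩ ⟨⟨a', b'⟩, ⟨c', d'⟩, ⟨e', f'⟩⟩
  simp [S1, ybL, e1, Matrix.one_apply, Prod.mk.injEq]
  try split_ifs <;> simp_all

private theorem S2e1 : S2 R = Matrix.reindex e1 e1 (ybR R ⊗ₖ (1 : Matrix (J3 N) (J3 N) ℂ)) := by
  ext ⟨⟨a, b⟩, ⟨c, d⟩, ⟨e, f⟩⟩ ⟨⟨a', b'⟩, ⟨c', d'⟩, ⟨e', f'⟩⟩
  simp [S2, ybL, ybR, e1, e2, Matrix.one_apply, Prod.mk.injEq]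
  try split_ifs <;> simp_all

private theorem S5e1 : S5 R = Matrix.reindex e1 e1 ((1 : Matrix (J3 N) (J3 N) ℂ) ⊗ₖ ybR R) := by
  ext ⟨⟨a, b⟩, ⟨c, d⟩, ⟨e, f⟩⟩ ⟨⟨a', b'⟩, ⟨c', d'⟩, ⟨e', f'⟩⟩
  simp [S5, ybR, e1, Matrix.one_apply, Prod.mk.injEq]
  try split_ifs <;> simp_all

private theorem S3e2 :
    S3 R = Matrix.reindex e2 e2
      ((1 : Matrix (Fin N) (Fin N) ℂ) ⊗ₖ (ybR R ⊗ₖ (1 : Matrix (J2 N) (J2 N) ℂ))) := by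
  ext ⟨⟨a, b⟩, ⟨c, d⟩, ⟨e, f⟩⟩ ⟨⟨a', b'⟩, ⟨c', d'⟩, ⟨e', f'⟩⟩
  simp [S3, ybR, e2, Matrix.one_apply, Prod.mk.injEq]
  try split_ifs <;> simp_all

private theorem S3e3 :
    S3 R = Matrix.reindex e3 e3
      ((1 : Matrix (J2 N) (J2 N) ℂ) ⊗ₖ (ybL R ⊗ₖ (1 : Matrix (Fin N) (Fin N) ℂ))) := by
  ext ⟨⟨a, b⟩, ⟨c, d⟩, ⟨e, f⟩⟩ ⟨⟨a', b'⟩, ⟨c', d'⟩, ⟨e', f'⟩⟩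
  simp [S3, ybL, e3, Matrix.one_apply, Prod.mk.injEq]
  try split_ifs <;> simp_all

private theorem S4e3 :
    S4 R = Matrix.reindex e3 e3
      ((1 : Matrix (J2 N) (J2 N) ℂ) ⊗ₖ (ybR R ⊗ₖ (1 : Matrix (Fin N) (Fin N) ℂ))) := by
  ext ⟨⟨a, b⟩, ⟨c, d⟩, ⟨e, f⟩⟩ ⟨⟨a', b'⟩, ⟨c', d'⟩, ⟨e', f'⟩⟩
  simp [S4, ybL, ybR, e1, e3, Matrix.one_apply, Prod.mk.injEq]
  try split_ifs <;> simp_all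

private theorem S1f4 : S1 R = Matrix.reindex f4 f4 (cab1 R ⊗ₖ (1 : Matrix (J2 N) (J2 N) ℂ)) := by
  ext ⟨⟨a, b⟩, ⟨c, d⟩, ⟨e, f⟩⟩ ⟨⟨a', b'⟩, ⟨c', d'⟩, ⟨e', f'⟩⟩
  simp [S1, cab1, f4, Matrix.one_apply, Prod.mk.injEq]
  try split_ifs <;> simp_all

private theorem S2f4 : S2 R = Matrix.reindex f4 f4 (cab2 R ⊗ₖ (1 : Matrix (J2 N) (J2 N) ℂ)) := by
  ext ⟨⟨a, b⟩, ⟨c, d⟩, ⟨e, f⟩⟩ ⟨⟨a', b'⟩, ⟨c', d'⟩, ⟨e', f'⟩⟩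
  simp [S2, cab2, ybL, e2, f4, Matrix.one_apply, Prod.mk.injEq]
  try split_ifs <;> simp_all

private theorem S3f4 : S3 R = Matrix.reindex f4 f4 (cab3 R ⊗ₖ (1 : Matrix (J2 N) (J2 N) ℂ)) := by
  ext ⟨⟨a, b⟩, ⟨c, d⟩, ⟨e, f⟩⟩ ⟨⟨a', b'⟩, ⟨c', d'⟩, ⟨e', f'⟩⟩
  simp [S3, cab3, f4, Matrix.one_apply, Prod.mk.injEq]
  try split_ifs <;> simp_all

private theorem S3f4' : S3 R = Matrix.reindex f4' f4' ((1 : Matrix (J2 N) (J2 N) ℂ) ⊗ₖ cab1 R) := by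
  ext ⟨⟨a, b⟩, ⟨c, d⟩, ⟨e, f⟩⟩ ⟨⟨a', b'⟩, ⟨c', d'⟩, ⟨e', f'⟩⟩
  simp [S3, cab1, f4', Matrix.one_apply, Prod.mk.injEq]
  try split_ifs <;> simp_all

private theorem S4f4' : S4 R = Matrix.reindex f4' f4' ((1 : Matrix (J2 N) (J2 N) ℂ) ⊗ₖ cab2 R) := by
  ext ⟨⟨a, b⟩, ⟨c, d⟩, ⟨e, f⟩⟩ ⟨⟨a', b'⟩, ⟨c', d'⟩, ⟨e', f'⟩⟩
  simp [S4, cab2, ybL, e1, f4', Matrix.one_apply, Prod.mk.injEq]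
  try split_ifs <;> simp_all

private theorem S5f4' : S5 R = Matrix.reindex f4' f4' ((1 : Matrix (J2 N) (J2 N) ℂ) ⊗ₖ cab3 R) := by
  ext ⟨⟨a, b⟩, ⟨c, d⟩, ⟨e, f⟩⟩ ⟨⟨a', b'⟩, ⟨c', d'⟩, ⟨e', f'⟩⟩
  simp [S5, cab3, f4', Matrix.one_apply, Prod.mk.injEq]
  try split_ifs <;> simp_all

-- glue lemmas
private theorem glueL (M : Matrix (J4 N) (J4 N) ℂ) :
    ybL (Matrix.reindex (Equiv.prodAssoc (Fin N) (Fin N) (Fin N × Fin N)).symm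
        (Equiv.prodAssoc (Fin N) (Fin N) (Fin N × Fin N)).symm M)
      = Matrix.reindex f4 f4 (M ⊗ₖ (1 : Matrix (J2 N) (J2 N) ℂ)) := by
  ext ⟨⟨a, b⟩, ⟨c, d⟩, ⟨e, f⟩⟩ ⟨⟨a', b'⟩, ⟨c', d'⟩, ⟨e', f'⟩⟩
  simp [ybL, f4, Matrix.one_apply, Prod.mk.injEq]
  try split_ifs <;> simp_all

private theorem glueR (M : Matrix (J4 N) (J4 N) ℂ) :
    ybR (Matrix.reindex (Equiv.prodAssoc (Fin N) (Fin N) (Fin N × Fin N)).symm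
        (Equiv.prodAssoc (Fin N) (Fin N) (Fin N × Fin N)).symm M)
      = Matrix.reindex f4' f4' ((1 : Matrix (J2 N) (J2 N) ℂ) ⊗ₖ M) := by
  ext ⟨⟨a, b⟩, ⟨c, d⟩, ⟨e, f⟩⟩ ⟨⟨a', b'⟩, ⟨c', d'⟩, ⟨e', f'⟩⟩
  simp [ybR, f4', Matrix.one_apply, Prod.mk.injEq]
  try split_ifs <;> simp_all

end CablingAux


section CablingMain

open Matrix Kronecker

variable {N : ℕ} (R : Matrix (Fin N × Fin N) (Fin N × Fin N) ℂ)

private theorem braid1 (hRY : SatisfiesYBE R) : S1 R * S2 R * S1 R = S2 R * S1 R * S2 R := by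
  simp only [S1e1, S2e1, reindex_mul, kron1_mul]
  rw [hRY]

private theorem braid2 (hRY : SatisfiesYBE R) : S2 R * S3 R * S2 R = S3 R * S2 R * S3 R := by
  simp only [S2, S3e2, reindex_mul, mul_1kron, kron1_mul]
  rw [hRY]

private theorem braid3 (hRY : SatisfiesYBE R) : S3 R * S4 R * S3 R = S4 R * S3 R * S4 R := by
  simp only [S3e3, S4e3, reindex_mul, mul_1kron, kron1_mul]
  rw [hRY]

private theorem braid4 (hRY : SatisfiesYBE R) : S4 R * S5 R * S4 R = S5 R * S4 R * S5 R := by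
  simp only [S4, S5e1, reindex_mul, mul_1kron]
  rw [hRY]

private theorem comm13 : S1 R * S3 R = S3 R * S1 R := kron_comm _ _
private theorem comm35 : S3 R * S5 R = S5 R * S3 R := by
  simp only [S3, S5, mul_1kron]
  rw [kron_comm]
private theorem comm14 : S1 R * S4 R = S4 R * S1 R := by
  rw [S1e1]; unfold S4; rw [reindex_mul, reindex_mul, kron_comm]
private theorem comm15 : S1 R * S5 R = S5 R * S1 R := by
  rw [S1e1, S5e1, reindex_mul, reindex_mul, kron_comm]
private theorem comm24 : S2 R * S4 R = S4 R * S2 R := by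
  rw [S2e1]; unfold S4; rw [reindex_mul, reindex_mul, kron_comm]
private theorem comm25 : S2 R * S5 R = S5 R * S2 R := by
  rw [S2e1, S5e1, reindex_mul, reindex_mul, kron_comm]

private theorem hybL : ybL (twoCabling R) = S2 R * S1 R * S3 R * S2 R := by
  rw [twoCabling, glueL]
  simp only [S1f4, S2f4, S3f4, reindex_mul, kron1_mul]

private theorem hybR : ybR (twoCabling R) = S4 R * S3 R * S5 R * S4 R := by
  rw [twoCabling, glueR]
  simp only [S3f4', S4f4', S5f4', reindex_mul, mul_1kron]

end CablingMain

/-- the 2-cabling of an invertible YBE solution satisfies the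
Yang–Baxter equation (as an `(N²)² × (N²)²` matrix). -/
theorem twoCabling_satisfiesYBE (N : ℕ)
    (R : Matrix (Fin N × Fin N) (Fin N × Fin N) ℂ)
    (hRu : IsUnit R) (hRY : SatisfiesYBE R) :
    SatisfiesYBE (twoCabling R) := by
  unfold SatisfiesYBE
  rw [hybL, hybR]
  exact cabword (S1 R) (S2 R) (S3 R) (S4 R) (S5 R)
    (braid1 R hRY) (braid2 R hRY) (braid3 R hRY) (braid4 R hRY)
    (comm13 R) (comm14 R) (comm15 R) (comm24 R) (comm25 R) (comm35 R)
end

section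
/- Let Q be an invertible monomial N×N complex matrix and let R be a charge conserving N²×N² complex matrix. Then (Q ⊗ₖ Q) * R * (Q ⊗ₖ Q)⁻¹ is charge conserving. -/
open Matrix Kronecker

/-- A square matrix indexed by `Fin N × Fin N` is charge conserving if
`R (i,j) (k,l) ≠ 0` implies `(k,l) = (i,j)` or `(k,l) = (j,i)`. -/
def ChargeConserving {N : ℕ} (R : Matrix (Fin N × Fin N) (Fin N × Fin N) ℂ) : Prop :=
  ∀ i j k l : Fin N, R (i, j) (k, l) ≠ 0 → (k, l) = (i, j) ∨ (k, l) = (j, i)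

/-- A monomial matrix: exactly one nonzero entry in each row and each column. -/
def IsMonomial {ι : Type*} (R : Matrix ι ι ℂ) : Prop :=
  (∀ i, ∃! j, R i j ≠ 0) ∧ (∀ j, ∃! i, R i j ≠ 0)

/-- conjugating a charge conserving matrix by `Q ⊗ₖ Q` with `Q`
an invertible monomial matrix preserves charge conservation. -/
theorem monomial_conj_preserves_cc (N : ℕ)
    (Q : Matrix (Fin N) (Fin N) ℂ) (hQmono : IsMonomial Q) (hQ : IsUnit Q)
    (R : Matrix (Fin N × Fin N) (Fin N × Fin N) ℂ) (hR : ChargeConserving R) :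
    ChargeConserving ((Q ⊗ₖ Q) * R * (Q ⊗ₖ Q)⁻¹) := by
  obtain ⟨hrow, hcol⟩ := hQmono
  set f : Fin N → Fin N := fun i => (hrow i).choose with hfdef
  have hf1 : ∀ i, Q i (f i) ≠ 0 := fun i => (hrow i).choose_spec.1
  have hf2 : ∀ i j, Q i j ≠ 0 → j = f i := fun i j h => (hrow i).choose_spec.2 j h
  have hfinj : Function.Injective f := by
    intro a b hab
    refine (hcol (f a)).unique (hf1 a) ?_
    rw [hab]; exact hf1 b
  have hfsurj : Function.Surjective f := Finite.surjective_of_injective hfinj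
  have hdet : IsUnit Q.det := (Matrix.isUnit_iff_isUnit_det Q).mp hQ
  have hmulinv : Q * Q⁻¹ = 1 := Matrix.mul_nonsing_inv Q hdet
  have hinv : ∀ j k, Q⁻¹ j k ≠ 0 → j = f k := by
    intro j k h
    obtain ⟨a, rfl⟩ := hfsurj j
    by_contra hne'
    have hak : a ≠ k := fun h' => hne' (by rw [h'])
    have h0 : (Q * Q⁻¹) a k = 0 := by rw [hmulinv, Matrix.one_apply_ne hak]
    rw [Matrix.mul_apply] at h0
    rw [Finset.sum_eq_single (f a)
      (fun b _ hb => by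
        have : Q a b = 0 := by
          by_contra hQab
          exact hb (hf2 a b hQab)
        rw [this, zero_mul])
      (fun hmem => absurd (Finset.mem_univ (f a)) hmem)] at h0
    rcases mul_eq_zero.mp h0 with h1 | h1
    · exact hf1 a h1
    · exact h h1
  intro i j k l hne
  rw [Matrix.inv_kronecker] at hne
  rw [Matrix.mul_apply] at hne
  obtain ⟨⟨c, d⟩, _, hcd⟩ := Finset.exists_ne_zero_of_sum_ne_zero hne
  rw [Matrix.mul_apply] at hcd
  have hcd' := left_ne_zero_of_mul hcd
  have hB := right_ne_zero_of_mul hcd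
  obtain ⟨⟨a, b⟩, _, hab⟩ := Finset.exists_ne_zero_of_sum_ne_zero hcd'
  have hA := left_ne_zero_of_mul hab
  have hRne := right_ne_zero_of_mul hab
  rw [Matrix.kroneckerMap_apply] at hA hB
  have ha : a = f i := hf2 i a (left_ne_zero_of_mul hA)
  have hb : b = f j := hf2 j b (right_ne_zero_of_mul hA)
  have hc : c = f k := hinv c k (left_ne_zero_of_mul hB)
  have hd : d = f l := hinv d l (right_ne_zero_of_mul hB)
  subst ha hb hc hd
  rcases hR _ _ _ _ hRne with h | h
  · left
    have h1 : f k = f i := (Prod.mk.injEq _ _ _ _ ▸ h).1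
    have h2 : f l = f j := (Prod.mk.injEq _ _ _ _ ▸ h).2
    rw [hfinj h1, hfinj h2]
  · right
    have h1 : f k = f j := (Prod.mk.injEq _ _ _ _ ▸ h).1
    have h2 : f l = f i := (Prod.mk.injEq _ _ _ _ ▸ h).2
    rw [hfinj h1, hfinj h2]
end

section
/- Let S be a charge conserving N²×N² complex matrix such that S(eⱼ ⊗ eⱼ) = βⱼ · (eⱼ ⊗ eⱼ) for each j, where the scalars β₁,…,β_N are pairwise distinct. If Q is an invertible N×N complex matrix such that (Q ⊗ₖ Q)⁻¹ * S * (Q ⊗ₖ Q) is charge conserving, then Q is a monomial matrix. (Hence the inner autoequivalences Φ_Q of YB¹(Mat^N) that restrict to autoequivalences of YB¹(Match^N) are exactly those with Q monomial.) -/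
open Matrix Kronecker

/-- if `S` is charge conserving with `S (eⱼ ⊗ eⱼ) = βⱼ (eⱼ ⊗ eⱼ)`
for pairwise distinct scalars `βⱼ`, and `(Q ⊗ₖ Q)⁻¹ S (Q ⊗ₖ Q)` is charge
conserving for some invertible `Q`, then `Q` is monomial. -/
theorem cc_conjugator_is_monomial (N : ℕ)
    (S : Matrix (Fin N × Fin N) (Fin N × Fin N) ℂ) (hS : ChargeConserving S)
    (β : Fin N → ℂ) (hβ : Function.Injective β)
    (hdiag : ∀ j : Fin N, ∀ p : Fin N × Fin N,
      S p (j, j) = if p = (j, j) then β j else 0)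
    (Q : Matrix (Fin N) (Fin N) ℂ) (hQ : IsUnit Q)
    (hcc : ChargeConserving ((Q ⊗ₖ Q)⁻¹ * S * (Q ⊗ₖ Q))) :
    IsMonomial Q := by
  set S' := (Q ⊗ₖ Q)⁻¹ * S * (Q ⊗ₖ Q) with hS'
  have hdet : IsUnit Q.det := (Matrix.isUnit_iff_isUnit_det Q).mp hQ
  have hQQ : IsUnit (Q ⊗ₖ Q).det := by
    rw [Matrix.det_kronecker]
    exact (hdet.pow _).mul (hdet.pow _)
  have hinj : Function.Injective Q.mulVec := Matrix.mulVec_injective_iff_isUnit.mpr hQ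
  -- key identity: (Q⊗Q) * S' = S * (Q⊗Q)
  have h1 : (Q ⊗ₖ Q) * S' = S * (Q ⊗ₖ Q) := by
    rw [hS', ← Matrix.mul_assoc, ← Matrix.mul_assoc, Matrix.mul_nonsing_inv _ hQQ,
      Matrix.one_mul]
  set γ : Fin N → ℂ := fun j => S' (j, j) (j, j) with hγ
  -- key scalar equation
  have key : ∀ a j : Fin N, Q a j ≠ 0 → β a = γ j := by
    intro a j hne
    have h2 := congrFun (congrFun h1 (a, a)) (j, j)
    rw [Matrix.mul_apply, Matrix.mul_apply] at h2
    rw [Finset.sum_eq_single ((j, j) : Fin N × Fin N)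
        (fun q _ hq => by
          obtain ⟨q1, q2⟩ := q
          have : S' (q1, q2) (j, j) = 0 := by
            by_contra h
            rcases hcc q1 q2 j j h with h' | h' <;>
              (injection h' with e1 e2; exact hq (by rw [← e1, ← e2]))
          rw [this, mul_zero])
        (fun h => absurd (Finset.mem_univ _) h)] at h2
    rw [Finset.sum_eq_single ((a, a) : Fin N × Fin N)
        (fun q _ hq => by
          obtain ⟨q1, q2⟩ := q
          have : S (a, a) (q1, q2) = 0 := by
            by_contra h
            rcases hS a a q1 q2 h with h' | h' <;> exact hq h'
          rw [this, zero_mul])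
        (fun h => absurd (Finset.mem_univ _) h)] at h2
    have hdaa : S (a, a) (a, a) = β a := by rw [hdiag a (a, a), if_pos rfl]
    rw [hdaa] at h2
    simp only [Matrix.kroneckerMap_apply] at h2
    have hqq : Q a j * Q a j ≠ 0 := mul_ne_zero hne hne
    have : (Q a j * Q a j) * γ j = (Q a j * Q a j) * β a := by
      rw [hγ]; linear_combination h2
    exact (mul_left_cancel₀ hqq this).symm
  -- each column has exactly one nonzero entry
  have hcol : ∀ j : Fin N, ∃! a, Q a j ≠ 0 := by
    intro j
    have hex : ∃ a, Q a j ≠ 0 := by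
      by_contra h
      push_neg at h
      have hz : Q.mulVec (Pi.single j 1) = Q.mulVec 0 := by
        funext i
        rw [Matrix.mulVec_zero]
        simp only [Matrix.mulVec, dotProduct, Pi.single_apply, mul_ite, mul_one, mul_zero]
        rw [Finset.sum_ite_eq' Finset.univ j (fun k => Q i k)]
        simp [h i]
      have := congrFun (hinj hz) j
      simp [Pi.single_apply] at this
    obtain ⟨a, ha⟩ := hex
    refine ⟨a, ha, fun b hb => ?_⟩
    exact hβ ((key b j hb).trans (key a j ha).symm)
  -- the column selector is injective
  classical
  set f : Fin N → Fin N := fun j => (hcol j).choose with hf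
  have hf1 : ∀ j, Q (f j) j ≠ 0 := fun j => (hcol j).choose_spec.1
  have hf2 : ∀ j a, Q a j ≠ 0 → a = f j := fun j a ha => (hcol j).choose_spec.2 a ha
  have hfinj : Function.Injective f := by
    intro j j' hjj'
    by_contra hne
    have ha' : Q (f j) j' ≠ 0 := by rw [hjj']; exact hf1 j'
    set v : Fin N → ℂ := fun k =>
      Q (f j) j' * (if k = j then 1 else 0) - Q (f j) j * (if k = j' then 1 else 0) with hv
    have hz : Q.mulVec v = Q.mulVec 0 := by
      funext i
      rw [Matrix.mulVec_zero]
      simp only [Matrix.mulVec, dotProduct, hv, mul_sub]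
      rw [Finset.sum_sub_distrib]
      have e1 : ∀ k, Q i k * (Q (f j) j' * (if k = j then (1:ℂ) else 0))
          = if k = j then Q i j * Q (f j) j' else 0 := by
        intro k; by_cases h : k = j <;> simp [h]
      have e2 : ∀ k, Q i k * (Q (f j) j * (if k = j' then (1:ℂ) else 0))
          = if k = j' then Q i j' * Q (f j) j else 0 := by
        intro k; by_cases h : k = j' <;> simp [h]
      rw [Finset.sum_congr rfl (fun k _ => e1 k), Finset.sum_congr rfl (fun k _ => e2 k),
        Finset.sum_ite_eq' Finset.univ j, Finset.sum_ite_eq' Finset.univ j']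
      simp only [Finset.mem_univ, if_true, Pi.zero_apply]
      by_cases hia : i = f j
      · subst hia; ring
      · have h3 : Q i j = 0 := by
          by_contra h; exact hia (hf2 j i h)
        have h4 : Q i j' = 0 := by
          by_contra h; exact hia ((hf2 j' i h).trans hjj'.symm)
        rw [h3, h4]; ring
    have hv0 := congrFun (hinj hz) j
    simp only [hv, Pi.zero_apply] at hv0
    rw [if_pos trivial, if_neg hne, mul_one, mul_zero, sub_zero] at hv0
    exact ha' hv0
  have hfsurj : Function.Surjective f := Finite.surjective_of_injective hfinj
  constructor
  · intro i
    obtain ⟨j, hj⟩ := hfsurj i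
    refine ⟨j, by rw [← hj]; exact hf1 j, fun j' hj' => ?_⟩
    have h5 : i = f j' := hf2 j' i hj'
    exact hfinj (h5.symm.trans hj.symm)
  · exact hcol
end

section
/- Let S_rev be the N×N permutation matrix of the order-reversing permutation i ↦ N+1−i of {1,…,N}, let D be an invertible diagonal N×N matrix, and set Q = D * S_rev (or Q = D). If R is an additive charge conserving N²×N² complex matrix, then (Q ⊗ₖ Q) * R * (Q ⊗ₖ Q)⁻¹ is additive charge conserving. -/
open Matrix Kronecker

/-- A square matrix indexed by `Fin N × Fin N` is additive charge conserving if
`R (i,j) (k,l) ≠ 0` implies `i + j = k + l` (values of indices). -/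
def AddChargeConserving {N : ℕ} (R : Matrix (Fin N × Fin N) (Fin N × Fin N) ℂ) : Prop :=
  ∀ i j k l : Fin N, R (i, j) (k, l) ≠ 0 → (i : ℕ) + (j : ℕ) = (k : ℕ) + (l : ℕ)

/-- The permutation matrix of the order-reversing permutation `i ↦ N + 1 - i`
of `{1, …, N}` (i.e. `Fin.rev` in 0-based indexing). -/
def revMat (N : ℕ) : Matrix (Fin N) (Fin N) ℂ :=
  Matrix.of fun i j => if i = Fin.rev j then 1 else 0

lemma revMat_mul_revMat (N : ℕ) : revMat N * revMat N = 1 := by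
  ext i j
  simp only [revMat, Matrix.mul_apply, Matrix.of_apply]
  rw [Finset.sum_eq_single (Fin.rev j)]
  · simp [Fin.rev_rev, Matrix.one_apply]
  · intro b _ hb
    simp [hb]
  · simp

lemma revMat_kron_apply (N : ℕ) (R : Matrix (Fin N × Fin N) (Fin N × Fin N) ℂ)
    (p q : Fin N × Fin N) :
    ((revMat N ⊗ₖ revMat N) * R * (revMat N ⊗ₖ revMat N)) p q
      = R (p.1.rev, p.2.rev) (q.1.rev, q.2.rev) := by
  have h1 : ((revMat N ⊗ₖ revMat N) * R) p = fun q => R (p.1.rev, p.2.rev) q := by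
    funext q
    simp only [Matrix.mul_apply, kroneckerMap_apply, revMat, Matrix.of_apply]
    rw [Fintype.sum_prod_type]
    rw [Finset.sum_eq_single p.1.rev]
    · rw [Finset.sum_eq_single p.2.rev]
      · simp [Fin.rev_rev]
      · intro b _ hb
        have : p.2 ≠ b.rev := fun h => hb (by rw [h, Fin.rev_rev])
        simp [this]
      · simp
    · intro a _ ha
      have : p.1 ≠ a.rev := fun h => ha (by rw [h, Fin.rev_rev])
      simp [this]
    · simp
  have h2 : ∀ f : Fin N × Fin N → ℂ, (∑ r, f r * (revMat N ⊗ₖ revMat N) r q)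
      = f (q.1.rev, q.2.rev) := by
    intro f
    simp only [kroneckerMap_apply, revMat, Matrix.of_apply]
    rw [Fintype.sum_prod_type]
    rw [Finset.sum_eq_single q.1.rev]
    · rw [Finset.sum_eq_single q.2.rev]
      · simp
      · intro b _ hb; simp [hb]
      · simp
    · intro a _ ha
      simp [ha]
    · simp
  rw [Matrix.mul_apply, h1, h2]

/-- for `Q = D * S_rev` or `Q = D` with `D` invertible diagonal,
conjugation by `Q ⊗ₖ Q` preserves additive charge conservation. -/
theorem rev_monomial_conj_preserves_acc (N : ℕ)
    (D : Matrix (Fin N) (Fin N) ℂ) (hDdiag : D.IsDiag) (hDu : IsUnit D)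
    (Q : Matrix (Fin N) (Fin N) ℂ) (hQ : Q = D * revMat N ∨ Q = D)
    (R : Matrix (Fin N × Fin N) (Fin N × Fin N) ℂ) (hR : AddChargeConserving R) :
    AddChargeConserving ((Q ⊗ₖ Q) * R * (Q ⊗ₖ Q)⁻¹) := by
  obtain ⟨d, hd⟩ : ∃ d, D = Matrix.diagonal d := ⟨fun i => D i i, (hDdiag.diagonal_diag).symm⟩
  set c : Fin N × Fin N → ℂ := fun p => d p.1 * d p.2 with hc
  have hDD : D ⊗ₖ D = Matrix.diagonal c := by
    rw [hd, Matrix.diagonal_kronecker_diagonal]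
  rcases hQ with hQ | hQ
  · -- Q = D * revMat N
    set P : Matrix (Fin N × Fin N) (Fin N × Fin N) ℂ := revMat N ⊗ₖ revMat N with hP
    have hQQ : Q ⊗ₖ Q = Matrix.diagonal c * P := by
      rw [hQ, Matrix.mul_kronecker_mul, hDD]
    have hPP : P * P = 1 := by
      rw [hP, ← Matrix.mul_kronecker_mul, revMat_mul_revMat, Matrix.one_kronecker_one]
    have hPinv : P⁻¹ = P := Matrix.inv_eq_right_inv hPP
    have hinv : (Q ⊗ₖ Q)⁻¹ = P * Matrix.diagonal (Ring.inverse c) := by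
      rw [hQQ, Matrix.mul_inv_rev, hPinv, Matrix.inv_diagonal]
    intro i j k l hne
    rw [hinv, hQQ] at hne
    have key : (Matrix.diagonal c * P * R * (P * Matrix.diagonal (Ring.inverse c))) (i,j) (k,l)
        = c (i,j) * (P * R * P) (i,j) (k,l) * Ring.inverse c (k,l) := by
      have : Matrix.diagonal c * P * R * (P * Matrix.diagonal (Ring.inverse c))
          = Matrix.diagonal c * (P * R * P) * Matrix.diagonal (Ring.inverse c) := by
        noncomm_ring
      rw [this, Matrix.mul_diagonal, Matrix.diagonal_mul]
    rw [key] at hne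
    have hR' : (P * R * P) (i,j) (k,l) ≠ 0 := by
      intro h0; apply hne; rw [h0]; ring
    rw [hP, revMat_kron_apply] at hR'
    have := hR _ _ _ _ hR'
    simp only [Fin.val_rev] at this
    have hi := i.isLt; have hj := j.isLt; have hk := k.isLt; have hl := l.isLt
    omega
  · -- Q = D
    have hQQ : Q ⊗ₖ Q = Matrix.diagonal c := by rw [hQ, hDD]
    intro i j k l hne
    rw [hQQ, Matrix.inv_diagonal, Matrix.mul_diagonal, Matrix.diagonal_mul] at hne
    exact hR _ _ _ _ (fun h0 => hne (by rw [h0]; ring))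
end

section
/- Let Q be an invertible N×N complex matrix such that for every additive charge conserving N²×N² complex matrix M, the matrix (Q ⊗ₖ Q) * M * (Q ⊗ₖ Q)⁻¹ is additive charge conserving. Then Q = D or Q = D * S_rev, where D is an invertible diagonal N×N matrix and S_rev is the permutation matrix of the order-reversing permutation i ↦ N+1−i of {1,…,N}. -/
open Matrix Kronecker

lemma arith_perm (N : ℕ) (f : Fin N → Fin N) (hinj : Function.Injective f)
    (hf : ∀ k l k' l' : Fin N, (k : ℕ) + (l : ℕ) = (k' : ℕ) + (l' : ℕ) →
      (f k : ℕ) + (f l : ℕ) = (f k' : ℕ) + (f l' : ℕ)) :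
    (∀ k, f k = k) ∨ (∀ k, f k = Fin.rev k) := by
  match N, f, hinj, hf with
  | 0, f, hinj, hf => exact Or.inl fun k => k.elim0
  | 1, f, hinj, hf => exact Or.inl fun k => Subsingleton.elim _ _
  | (n + 2), f, hinj, hf =>
    have h0 : 0 < n + 2 := by omega
    have h1 : 1 < n + 2 := by omega
    set a : ℤ := ((f ⟨0, h0⟩ : ℕ) : ℤ) with ha
    set d : ℤ := ((f ⟨1, h1⟩ : ℕ) : ℤ) - a with hd
    have key : ∀ k : ℕ, ∀ hk : k < n + 2, ((f ⟨k, hk⟩ : ℕ) : ℤ) = a + k * d := by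
      intro k
      induction k using Nat.strong_induction_on with
      | _ k ih =>
        match k with
        | 0 => intro hk; rw [ha]; norm_num
        | 1 => intro hk; rw [hd]; push_cast; ring
        | (m + 2) =>
          intro hk
          have hm : m < n + 2 := by omega
          have hm1 : m + 1 < n + 2 := by omega
          have hs : (f ⟨m+2, hk⟩ : ℕ) + (f ⟨m, hm⟩ : ℕ) =
              (f ⟨m+1, hm1⟩ : ℕ) + (f ⟨m+1, hm1⟩ : ℕ) :=
            hf ⟨m+2, hk⟩ ⟨m, hm⟩ ⟨m+1, hm1⟩ ⟨m+1, hm1⟩ (by simp; omega)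
          have hsZ : ((f ⟨m+2, hk⟩ : ℕ) : ℤ) + ((f ⟨m, hm⟩ : ℕ) : ℤ) =
              ((f ⟨m+1, hm1⟩ : ℕ) : ℤ) + ((f ⟨m+1, hm1⟩ : ℕ) : ℤ) := by exact_mod_cast hs
          have ih0 := ih m (by omega) hm
          have ih1 := ih (m+1) (by omega) hm1
          push_cast at ih1 ⊢
          linear_combination hsZ + 2 * ih1 - ih0
    have hd0 : d ≠ 0 := by
      intro hdz
      have h2 : ((f ⟨1, h1⟩ : ℕ) : ℤ) = ((f ⟨0, h0⟩ : ℕ) : ℤ) := by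
        rw [hd, ha] at hdz; linarith
      have h3 : f ⟨1, h1⟩ = f ⟨0, h0⟩ := by
        apply Fin.ext; exact_mod_cast h2
      have := hinj h3
      simp [Fin.ext_iff] at this
    have ha0 : 0 ≤ a := by positivity
    have haN : a ≤ (n : ℤ) + 1 := by
      have := (f ⟨0, h0⟩).isLt
      rw [ha]; omega
    have hlast := key (n + 1) (by omega)
    have hl0 : (0 : ℤ) ≤ a + ((n : ℤ) + 1) * d := by
      rw [show ((n : ℤ) + 1) = ((n + 1 : ℕ) : ℤ) by push_cast; ring, ← hlast]
      exact Int.natCast_nonneg _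
    have hlN : a + ((n : ℤ) + 1) * d ≤ (n : ℤ) + 1 := by
      rw [show ((n : ℤ) + 1) = ((n + 1 : ℕ) : ℤ) by push_cast; ring, ← hlast]
      have := (f ⟨n + 1, by omega⟩).isLt
      push_cast; omega
    have hNpos : (1 : ℤ) ≤ (n : ℤ) + 1 := by omega
    have hcase : (d = 1 ∧ a = 0) ∨ (d = -1 ∧ a = (n : ℤ) + 1) := by
      rcases lt_or_gt_of_ne hd0 with hneg | hpos
      · right
        have hd1 : d = -1 := by nlinarith
        exact ⟨hd1, by rw [hd1] at hl0; linarith⟩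
      · left
        have hd1 : d = 1 := by nlinarith
        exact ⟨hd1, by rw [hd1] at hlN; linarith⟩
    rcases hcase with ⟨hd1, ha1⟩ | ⟨hd1, ha1⟩
    · left
      intro k
      have hk := key k.val k.isLt
      rw [hd1, ha1, Fin.eta] at hk
      apply Fin.ext
      have : ((f k : ℕ) : ℤ) = (k : ℕ) := by rw [hk]; ring
      exact_mod_cast this
    · right
      intro k
      have hk := key k.val k.isLt
      rw [hd1, ha1, Fin.eta] at hk
      apply Fin.ext
      rw [Fin.val_rev]
      have hkN := k.isLt
      have h5 : ((f k : ℕ) : ℤ) = (n : ℤ) + 1 - (k : ℕ) := by rw [hk]; ring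
      omega

lemma mul_std_mul {n : Type*} [Fintype n] [DecidableEq n] (A B : Matrix n n ℂ) (p q x y : n) :
    (A * Matrix.single p q (1:ℂ) * B) x y = A x p * B q y := by
  simp [Matrix.mul_apply, Matrix.single, ite_and, mul_ite, ite_mul,
    Finset.sum_ite_eq, Finset.sum_ite_eq']

/-- if conjugation by `Q ⊗ₖ Q` preserves additive charge
conservation for every additive charge conserving matrix, then `Q = D` or
`Q = D * S_rev` with `D` invertible diagonal. -/
theorem acc_stabiliser_is_diag_or_rev (N : ℕ)
    (Q : Matrix (Fin N) (Fin N) ℂ) (hQ : IsUnit Q)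
    (h : ∀ M : Matrix (Fin N × Fin N) (Fin N × Fin N) ℂ, AddChargeConserving M →
      AddChargeConserving ((Q ⊗ₖ Q) * M * (Q ⊗ₖ Q)⁻¹)) :
    ∃ D : Matrix (Fin N) (Fin N) ℂ, D.IsDiag ∧ IsUnit D ∧
      (Q = D ∨ Q = D * revMat N) := by
  have hdet : IsUnit Q.det := (Matrix.isUnit_iff_isUnit_det Q).mp hQ
  have hQQ : Q⁻¹ * Q = 1 := Matrix.nonsing_inv_mul Q hdet
  -- Step 1: key entrywise consequence
  have key2 : ∀ k l k' l' i j i' j' : Fin N, (k : ℕ) + (l : ℕ) = (k' : ℕ) + (l' : ℕ) →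
      Q i k ≠ 0 → Q j l ≠ 0 → Q⁻¹ k' i' ≠ 0 → Q⁻¹ l' j' ≠ 0 →
      (i : ℕ) + (j : ℕ) = (i' : ℕ) + (j' : ℕ) := by
    intro k l k' l' i j i' j' hsum hik hjl hki hlj
    set M := Matrix.single ((k, l) : Fin N × Fin N) ((k', l') : Fin N × Fin N) (1 : ℂ)
      with hM
    have hMacc : AddChargeConserving M := by
      intro a b c d hne
      rw [hM] at hne
      simp only [Matrix.single, Matrix.of_apply, ne_eq, ite_eq_right_iff,
        one_ne_zero, imp_false, not_forall, not_not] at hne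
      rcases hne with ⟨⟨rfl, rfl⟩, ⟨rfl, rfl⟩⟩
      exact hsum
    apply h M hMacc i j i' j'
    rw [Matrix.inv_kronecker, mul_std_mul]
    simp only [Matrix.kroneckerMap_apply]
    exact mul_ne_zero (mul_ne_zero hik hjl) (mul_ne_zero hki hlj)
  -- Step 2: the one nonzero entry per column
  have hex : ∀ k : Fin N, ∃ a : Fin N, Q⁻¹ k a ≠ 0 ∧ Q a k ≠ 0 := by
    intro k
    have h1 : (Q⁻¹ * Q) k k = 1 := by rw [hQQ]; simp
    rw [Matrix.mul_apply] at h1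
    have h2 : ∑ i, Q⁻¹ k i * Q i k ≠ 0 := by rw [h1]; exact one_ne_zero
    obtain ⟨a, _, ha⟩ := Finset.exists_ne_zero_of_sum_ne_zero h2
    exact ⟨a, fun hz => ha (by rw [hz]; ring), fun hz => ha (by rw [hz]; ring)⟩
  choose f hf1 hf2 using hex
  have col_eq : ∀ (k i : Fin N), Q i k ≠ 0 → i = f k := by
    intro k i hik
    have := key2 k k k k i (f k) (f k) (f k) rfl hik (hf2 k) (hf1 k) (hf1 k)
    exact Fin.ext (by omega)
  have row_eq : ∀ (k i' : Fin N), Q⁻¹ k i' ≠ 0 → i' = f k := by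
    intro k i' hki
    have := key2 k k k k (f k) (f k) i' (f k) rfl (hf2 k) (hf2 k) hki (hf1 k)
    exact Fin.ext (by omega)
  have hinj : Function.Injective f := by
    intro k1 k2 hfk
    by_contra hne
    have hentry : (Q⁻¹ * Q) k1 k2 = Q⁻¹ k1 (f k1) * Q (f k1) k2 := by
      rw [Matrix.mul_apply]
      apply Finset.sum_eq_single (f k1)
      · intro b _ hb
        have : Q⁻¹ k1 b = 0 := by
          by_contra hz
          exact hb (row_eq k1 b hz)
        rw [this, zero_mul]
      · intro hb; exact absurd (Finset.mem_univ _) hb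
    have hz : (Q⁻¹ * Q) k1 k2 = 0 := by rw [hQQ]; simp [Matrix.one_apply, hne]
    rw [hentry] at hz
    rcases mul_eq_zero.mp hz with h' | h'
    · exact hf1 k1 h'
    · rw [hfk] at h'; exact hf2 k2 h'
  have hff : ∀ k l k' l' : Fin N, (k : ℕ) + (l : ℕ) = (k' : ℕ) + (l' : ℕ) →
      (f k : ℕ) + (f l : ℕ) = (f k' : ℕ) + (f l' : ℕ) := by
    intro k l k' l' hsum
    exact key2 k l k' l' (f k) (f l) (f k') (f l') hsum (hf2 k) (hf2 l) (hf1 k') (hf1 l')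
  rcases arith_perm N f hinj hff with hid | hrev
  · refine ⟨Q, ?_, hQ, Or.inl rfl⟩
    intro i j hij
    by_contra hz
    exact hij ((col_eq j i hz).trans (hid j))
  · refine ⟨Matrix.diagonal (fun i => Q i (Fin.rev i)), Matrix.isDiag_diagonal _, ?_, Or.inr ?_⟩
    · have hnz : ∀ i : Fin N, Q i (Fin.rev i) ≠ 0 := by
        intro i
        have := hf2 (Fin.rev i)
        rwa [hrev (Fin.rev i), Fin.rev_rev] at this
      rw [Matrix.isUnit_iff_isUnit_det, Matrix.det_diagonal]
      rw [isUnit_iff_ne_zero]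
      exact Finset.prod_ne_zero_iff.mpr fun i _ => hnz i
    · ext i k
      rw [Matrix.diagonal_mul]
      show Q i k = Q i (Fin.rev i) * (if i = Fin.rev k then 1 else 0)
      by_cases hik : i = Fin.rev k
      · rw [if_pos hik, mul_one, hik, Fin.rev_rev]
      · rw [if_neg hik, mul_zero]
        by_contra hz
        exact hik ((col_eq k i hz).trans (hrev k))
end

section
/- Fix n ≥ 2. Let R be the 4×4 complex matrix which, in the ordered basis |11⟩,|21⟩,|12⟩,|22⟩ of ℂ²⊗ℂ², has diagonal blocks α, [[a,b],[c,d]], β (i.e., R|11⟩=α|11⟩, R|22⟩=β|22⟩, and R preserves span{|21⟩,|12⟩} with matrix [[a,b],[c,d]]). Let X = diag(w,x,y,z) be invertible diagonal and S := X * R * X⁻¹. For 1 ≤ i ≤ n define the 2×2 matrix A(i) := diag((y/x)^{n−i}, 1), and let A := A(1) ⊗ₖ A(2) ⊗ₖ ⋯ ⊗ₖ A(n), a diagonal matrix on (ℂ²)^{⊗n}. Then for every 1 ≤ i ≤ n−1, A * Rᵢ * A⁻¹ = Sᵢ, where Rᵢ = 1₂^{⊗(i−1)} ⊗ₖ R ⊗ₖ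 1₂^{⊗(n−i−1)} and Sᵢ = 1₂^{⊗(i−1)} ⊗ₖ S ⊗ₖ 1₂^{⊗(n−i−1)}. (Hence X-symmetry is implemented by a natural isomorphism for N = 2.) -/
open Matrix Kronecker

/-- The charge conserving `4 × 4` matrix with diagonal blocks `α`,
`[[a,b],[c,d]]`, `β` in the ordered basis `|11⟩, |21⟩, |12⟩, |22⟩` of
`ℂ² ⊗ ℂ²` (indexed by `Fin 2 × Fin 2`). -/
def ccMat2 (α β a b c d : ℂ) : Matrix (Fin 2 × Fin 2) (Fin 2 × Fin 2) ℂ :=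
  Matrix.of fun p q =>
    if p = ((0, 0) : Fin 2 × Fin 2) ∧ q = ((0, 0) : Fin 2 × Fin 2) then α else
    if p = ((1, 1) : Fin 2 × Fin 2) ∧ q = ((1, 1) : Fin 2 × Fin 2) then β else
    if p = ((1, 0) : Fin 2 × Fin 2) ∧ q = ((1, 0) : Fin 2 × Fin 2) then a else
    if p = ((1, 0) : Fin 2 × Fin 2) ∧ q = ((0, 1) : Fin 2 × Fin 2) then b else
    if p = ((0, 1) : Fin 2 × Fin 2) ∧ q = ((1, 0) : Fin 2 × Fin 2) then c else
    if p = ((0, 1) : Fin 2 × Fin 2) ∧ q = ((0, 1) : Fin 2 × Fin 2) then d else 0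

/-- `diag(w,x,y,z)` in the ordered basis `|11⟩, |21⟩, |12⟩, |22⟩`. -/
def diag4 (w x y z : ℂ) : Matrix (Fin 2 × Fin 2) (Fin 2 × Fin 2) ℂ :=
  Matrix.diagonal fun p =>
    if p = ((0, 0) : Fin 2 × Fin 2) then w else
    if p = ((1, 0) : Fin 2 × Fin 2) then x else
    if p = ((0, 1) : Fin 2 × Fin 2) then y else z

/-- `A = A(1) ⊗ₖ ⋯ ⊗ₖ A(n)` where `A(i) = diag((y/x)^{n-i}, 1)` (1-based `i`),
a diagonal matrix on `(ℂ²)^{⊗ n}`. -/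
noncomputable def Amat (x y : ℂ) (n : ℕ) : Matrix (Fin n → Fin 2) (Fin n → Fin 2) ℂ :=
  Matrix.of fun v w =>
    ∏ k : Fin n,
      (if v k = w k then (if v k = 0 then (y / x) ^ (n - 1 - (k : ℕ)) else 1) else 0)

/-!
Both `A` and `X` are invertible diagonal matrices, and `A` is a tensor product of site weights
`f k`, so conjugating `Rᵢ` by `A` only sees the weights at sites `i, i + 1`: it is `Sᵢ'` for
`S' = (f i ⊗ f (i+1)) R (f i ⊗ f (i+1))⁻¹`. Conjugating a charge conserving `R` by a diagonal
`g` fixes `α, β, a, d` and scales `b` by `g |21⟩ / g |12⟩` and `c` by the inverse ratio.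
For `X` this ratio is `x / y`; for the weights of `A`, with `t = y / x` and `m = n - i - 2`, it is
`t ^ m / t ^ (m + 1) = x / y` as well.
-/

namespace Matrix

variable {ι K : Type*} [Fintype ι] [DecidableEq ι] [Field K]

theorem diagonal_mul_mul_inv_diagonal {d : ι → K} (hd : ∀ i, d i ≠ 0) (M : Matrix ι ι K) :
    diagonal d * M * (diagonal d)⁻¹ = of fun i j => d i * M i j / d j := by
  have hinv : (diagonal d)⁻¹ = diagonal d⁻¹ :=
    inv_eq_right_inv <| by rw [diagonal_mul_diagonal, ← diagonal_one]; simp [hd]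
  ext i j
  simp [hinv, diagonal_mul, mul_diagonal, div_eq_mul_inv]

end Matrix

theorem of_prod_ite_eq_diagonal {n N : ℕ} {K : Type*} [CommMonoidWithZero K]
    (f : Fin n → Fin N → K) :
    (of fun v w : Fin n → Fin N => ∏ k, if v k = w k then f k (v k) else 0)
      = diagonal fun v => ∏ k, f k (v k) := by
  ext v w
  by_cases hvw : v = w
  · simp [hvw]
  · obtain ⟨k, hk⟩ := Function.ne_iff.mp hvw
    rw [of_apply, diagonal_apply_ne _ hvw]
    exact Finset.prod_eq_zero (Finset.mem_univ k) (if_neg hk)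

theorem Fin.prod_univ_eq_mul_mul_prod_filter {n : ℕ} {M : Type*} [CommMonoid M]
    (g : Fin n → M) (i : Fin n) (h : (i : ℕ) + 1 < n) :
    ∏ k, g k = g i * g ⟨i + 1, h⟩ *
      ∏ k ∈ Finset.univ.filter (fun k : Fin n => (k : ℕ) ≠ i ∧ (k : ℕ) ≠ i + 1),
        g k := by
  have hpair : Finset.univ.filter (fun k : Fin n => ¬((k : ℕ) ≠ i ∧ (k : ℕ) ≠ i + 1))
      = {i, ⟨i + 1, h⟩} := by
    ext k
    simp only [Finset.mem_filter, Finset.mem_univ, true_and, Finset.mem_insert,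
      Finset.mem_singleton, Fin.ext_iff]
    omega
  have hne : i ≠ ⟨i + 1, h⟩ := by simp [Fin.ext_iff]
  rw [← Finset.prod_filter_not_mul_prod_filter Finset.univ
    (fun k : Fin n => (k : ℕ) ≠ i ∧ (k : ℕ) ≠ i + 1), hpair, Finset.prod_pair hne]

theorem diagonal_prod_mul_braidGen_mul_inv {n N : ℕ}
    (R : Matrix (Fin N × Fin N) (Fin N × Fin N) ℂ) (i : Fin n)
    (h : (i : ℕ) + 1 < n) {f : Fin n → Fin N → ℂ} (hf : ∀ k s, f k s ≠ 0) :
    diagonal (fun v => ∏ k, f k (v k)) * braidGen R n i h *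
        (diagonal fun v => ∏ k, f k (v k))⁻¹
      = braidGen (diagonal (fun p => f i p.1 * f ⟨i + 1, h⟩ p.2) * R *
          (diagonal fun p => f i p.1 * f ⟨i + 1, h⟩ p.2)⁻¹) n i h := by
  have hprod : ∀ (v : Fin n → Fin N) (s : Finset (Fin n)), ∏ k ∈ s, f k (v k) ≠ 0 :=
    fun v s => Finset.prod_ne_zero_iff.mpr fun k _ => hf k (v k)
  rw [diagonal_mul_mul_inv_diagonal (fun v => hprod v _),
    diagonal_mul_mul_inv_diagonal (fun p => mul_ne_zero (hf _ _) (hf _ _))]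
  ext v u
  simp only [braidGen, of_apply]
  rw [Fin.prod_univ_eq_mul_mul_prod_filter _ i h, Fin.prod_univ_eq_mul_mul_prod_filter _ i h]
  set s := Finset.univ.filter (fun k : Fin n => (k : ℕ) ≠ i ∧ (k : ℕ) ≠ i + 1)
  have hcomm : (∏ k ∈ s, f k (v k)) * (∏ k ∈ s, if v k = u k then (1 : ℂ) else 0)
      = (∏ k ∈ s, if v k = u k then (1 : ℂ) else 0) * ∏ k ∈ s, f k (u k) := by
    rw [← Finset.prod_mul_distrib, ← Finset.prod_mul_distrib]
    refine Finset.prod_congr rfl fun k _ => ?_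
    split_ifs with hk <;> simp [hk]
  set i₁ : Fin n := ⟨i + 1, h⟩
  have hus : ∏ k ∈ s, f k (u k) ≠ 0 := hprod u s
  have hui : f i (u i) ≠ 0 := hf i (u i)
  have hui₁ : f i₁ (u i₁) ≠ 0 := hf i₁ (u i₁)
  field_simp
  linear_combination f i (v i) * f i₁ (v i₁) * R (v i, v i₁) (u i, u i₁) * hcomm

theorem diagonal_mul_ccMat2_mul_inv_diagonal (α β a b c d : ℂ) {g : Fin 2 × Fin 2 → ℂ}
    (hg : ∀ p, g p ≠ 0) :
    diagonal g * ccMat2 α β a b c d * (diagonal g)⁻¹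
      = ccMat2 α β a (g (1, 0) / g (0, 1) * b) (g (0, 1) / g (1, 0) * c) d := by
  rw [diagonal_mul_mul_inv_diagonal hg]
  ext ⟨p₁, p₂⟩ ⟨q₁, q₂⟩
  fin_cases p₁ <;> fin_cases p₂ <;> fin_cases q₁ <;> fin_cases q₂ <;>
    simp [ccMat2, mul_div_cancel_left₀, hg] <;> field_simp [hg]

theorem x_symmetry_rank2_general (n : ℕ) (α β a b c d w x y z : ℂ)
    (hw : w ≠ 0) (hx : x ≠ 0) (hy : y ≠ 0) (hz : z ≠ 0) :
    IsUnit (Amat x y n) ∧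
      ∀ (i : Fin n) (h : (i : ℕ) + 1 < n),
        Amat x y n * braidGen (ccMat2 α β a b c d) n i h * (Amat x y n)⁻¹
          = braidGen (diag4 w x y z * ccMat2 α β a b c d * (diag4 w x y z)⁻¹) n i h := by
  set t := y / x
  set f : Fin n → Fin 2 → ℂ := fun k s => if s = 0 then t ^ (n - 1 - k) else 1
  have hf : ∀ k s, f k s ≠ 0 := fun k s => by
    simp only [f]; split_ifs <;> simp [t, hx, hy]
  have hA : Amat x y n = diagonal fun v => ∏ k, f k (v k) := of_prod_ite_eq_diagonal f
  refine ⟨?_, fun i h => ?_⟩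
  · rw [hA, isUnit_diagonal, Pi.isUnit_iff]
    exact fun v => (Finset.prod_ne_zero_iff.mpr fun k _ => hf k (v k)).isUnit
  have hstep : n - 1 - i = n - 1 - (i + 1) + 1 := by omega
  rw [hA, diagonal_prod_mul_braidGen_mul_inv _ i h hf,
    diagonal_mul_ccMat2_mul_inv_diagonal _ _ _ _ _ _ (fun p => mul_ne_zero (hf _ _) (hf _ _)),
    diag4, diagonal_mul_ccMat2_mul_inv_diagonal]
  · simp only [f, t, hstep, pow_succ, one_ne_zero, zero_ne_one, ↓reduceIte, one_mul, mul_one,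
      Prod.mk.injEq, and_true, and_false, and_self]
    congr 3 <;> field_simp
  · intro p
    split_ifs <;> assumption

/-- for a charge conserving `4 × 4` matrix `R`, `X = diag(w,x,y,z)`
invertible diagonal and `S = X R X⁻¹`, the diagonal matrix
`A = A(1) ⊗ₖ ⋯ ⊗ₖ A(n)` with `A(i) = diag((y/x)^{n-i}, 1)` satisfies
`A Rᵢ A⁻¹ = Sᵢ` for all `1 ≤ i ≤ n - 1`. -/
theorem x_symmetry_rank2 (n : ℕ) (hn : 2 ≤ n) (α β a b c d w x y z : ℂ)
    (hw : w ≠ 0) (hx : x ≠ 0) (hy : y ≠ 0) (hz : z ≠ 0) :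
    IsUnit (Amat x y n) ∧
      ∀ (i : Fin n) (h : (i : ℕ) + 1 < n),
        Amat x y n * braidGen (ccMat2 α β a b c d) n i h * (Amat x y n)⁻¹
          = braidGen (diag4 w x y z * ccMat2 α β a b c d * (diag4 w x y z)⁻¹) n i h :=
  x_symmetry_rank2_general n α β a b c d w x y z hw hx hy hz
end
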